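/- arXiv:2201.02488 — 3 statements merged into one kernel-verified Lean document; each statement's English description precedes it below -/
import Mathlib

section
/- Let (A, θ) be a Z2-graded C*-algebra and let φ be a pure even state on A such that the GNS representations π_φ and π_{φ∘θ} are not disjoint. Then there exists a self-adjoint unitary U in the von Neumann algebra π_φ(A₊)'' such that U π_φ(a) U* = π_φ(θ(a)) for all a ∈ A and ⟨U ξ_φ, ξ_φ⟩ ≥ 0. -/
noncomputable section

open scoped ComplexOrder InnerProductSpace

/-- A state on a unital complex normed `*`-algebra: a unital positive linear functional. -/
def IsState {A : Type*} [NormedRing A] [StarRing A] [NormedAlgebra ℂ A]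
    (φ : A →ₗ[ℂ] ℂ) : Prop :=
  φ 1 = 1 ∧ ∀ a : A, 0 ≤ φ (star a * a)

/-- A pure state: an extreme point of the set of states. -/
def IsPureState {A : Type*} [NormedRing A] [StarRing A] [NormedAlgebra ℂ A]
    (φ : A →ₗ[ℂ] ℂ) : Prop :=
  φ ∈ Set.extremePoints ℝ {ψ : A →ₗ[ℂ] ℂ | IsState ψ}

lemma exists_clm_extension {E : Type*} [AddCommGroup E] [Module ℂ E]
    {H : Type*} [NormedAddCommGroup H] [InnerProductSpace ℂ H] [CompleteSpace H]
    (J L : E →ₗ[ℂ] H) (hnorm : ∀ a, ‖L a‖ = ‖J a‖)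
    (hd : Dense (Set.range fun a => J a)) :
    ∃ U : H →L[ℂ] H, ∀ a, U (J a) = L a := by
  have hker : LinearMap.ker J ≤ LinearMap.ker L := by
    intro a ha
    have : ‖L a‖ = 0 := by
      rw [hnorm a, LinearMap.mem_ker.mp ha, norm_zero]
    simpa [LinearMap.mem_ker] using norm_eq_zero.mp this
  set M := LinearMap.range J with hM
  let L' : (E ⧸ LinearMap.ker J) →ₗ[ℂ] H := Submodule.liftQ (LinearMap.ker J) L hker
  let g : M →ₗ[ℂ] H := L'.comp (J.quotKerEquivRange.symm.toLinearMap)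
  have hg : ∀ a : E, g ⟨J a, LinearMap.mem_range_self J a⟩ = L a := by
    intro a
    have h1 : J.quotKerEquivRange (Submodule.Quotient.mk a)
        = ⟨J a, LinearMap.mem_range_self J a⟩ := by
      ext
      exact J.quotKerEquivRange_apply_mk a
    have h2 : J.quotKerEquivRange.symm ⟨J a, LinearMap.mem_range_self J a⟩
        = Submodule.Quotient.mk a := by
      rw [← h1, LinearEquiv.symm_apply_apply]
    show L' (J.quotKerEquivRange.symm ⟨J a, LinearMap.mem_range_self J a⟩) = L a
    rw [h2]
    exact Submodule.liftQ_apply _ L a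
  have hgn : ∀ x : M, ‖g x‖ ≤ 1 * ‖x‖ := by
    rintro ⟨-, a, rfl⟩
    rw [hg a, one_mul]
    rw [hnorm a]
    rfl
  let gc : M →L[ℂ] H := g.mkContinuous 1 hgn
  have hdr : DenseRange (M.subtypeL : M →L[ℂ] H) := by
    have h0 : Set.range ((M.subtypeL : M →L[ℂ] H)) = (M : Set H) := Subtype.range_coe
    rw [DenseRange, h0]
    have : (M : Set H) = Set.range fun a => J a := by
      ext x; simp [hM, LinearMap.mem_range, eq_comm]
    rw [this]; exact hd
  have hui : IsUniformInducing (M.subtypeL : M →L[ℂ] H) :=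
    isometry_subtype_coe.isUniformInducing
  refine ⟨gc.extend M.subtypeL, fun a => ?_⟩
  have := ContinuousLinearMap.extend_eq (f := gc) (e := M.subtypeL) hdr hui
    ⟨J a, LinearMap.mem_range_self J a⟩
  simpa [gc, hg a] using this

lemma beta_lemma {H : Type*} [NormedAddCommGroup H] [InnerProductSpace ℂ H]
    (T P Q1 Q2 : H →L[ℂ] H) (ξ : H)
    (hs : ∀ u v : H, ⟪u, P v⟫_ℂ = ⟪Q1 u, Q1 v⟫_ℂ + ⟪Q2 u, Q2 v⟫_ℂ)
    (hPT : ∀ x : H, P (T x) = T (P x))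
    (hTmove : ∀ x y : H, ⟪T x, y⟫_ℂ = ⟪x, T y⟫_ℂ)
    (hTn : ‖T‖ ≤ 2⁻¹) (hξ1 : ‖ξ‖ = 1) :
    ‖Q1 (T ξ)‖ ^ 2 + ‖Q2 (T ξ)‖ ^ 2 ≤ ‖Q1 ξ‖ ^ 2 + ‖Q2 ξ‖ ^ 2 := by
  have hre_self : ∀ x : H, ⟪x, x⟫_ℂ = ((‖x‖ ^ 2 : ℝ) : ℂ) := by
    intro x
    rw [inner_self_eq_norm_sq_to_K]
    norm_cast
  set g : H → ℝ := fun u => ‖Q1 u‖ ^ 2 + ‖Q2 u‖ ^ 2 with hgdef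
  have hgs : ∀ u : H, ⟪u, P u⟫_ℂ = ((g u : ℝ) : ℂ) := by
    intro u
    simp only [hgdef]
    rw [hs, hre_self, hre_self]
    push_cast
    ring
  have hgnn : ∀ u : H, 0 ≤ g u := by
    intro u
    simp only [hgdef]
    positivity
  have hCS : ∀ u v : H, ‖⟪u, P v⟫_ℂ‖ ^ 2 ≤ g u * g v := by
    intro u v
    rw [hs]
    have h1 := norm_inner_le_norm (𝕜 := ℂ) (Q1 u) (Q1 v)
    have h2 := norm_inner_le_norm (𝕜 := ℂ) (Q2 u) (Q2 v)
    have h3 : ‖⟪Q1 u, Q1 v⟫_ℂ + ⟪Q2 u, Q2 v⟫_ℂ‖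
        ≤ ‖Q1 u‖ * ‖Q1 v‖ + ‖Q2 u‖ * ‖Q2 v‖ :=
      le_trans (norm_add_le _ _) (add_le_add h1 h2)
    have h5 : ‖⟪Q1 u, Q1 v⟫_ℂ + ⟪Q2 u, Q2 v⟫_ℂ‖ ^ 2
        ≤ (‖Q1 u‖ * ‖Q1 v‖ + ‖Q2 u‖ * ‖Q2 v‖) ^ 2 :=
      pow_le_pow_left₀ (norm_nonneg _) h3 2
    refine le_trans h5 ?_
    simp only [hgdef]
    nlinarith [sq_nonneg (‖Q1 u‖ * ‖Q2 v‖ - ‖Q2 u‖ * ‖Q1 v‖),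
      norm_nonneg (Q1 u), norm_nonneg (Q1 v), norm_nonneg (Q2 u), norm_nonneg (Q2 v)]
  set β : ℕ → ℝ := fun k => g ((T ^ k) ξ) with hβdef
  have happ : ∀ (k : ℕ) (x : H), T ((T ^ k) x) = (T ^ (k + 1)) x := by
    intro k x
    rw [pow_succ', ContinuousLinearMap.mul_apply]
  have hβnn : ∀ k, 0 ≤ β k := fun k => hgnn _
  have hβre : ∀ k, β (k + 1) = RCLike.re ⟪(T ^ k) ξ, P ((T ^ (k + 2)) ξ)⟫_ℂ := by
    intro k
    have e1 : ⟪(T ^ (k+1)) ξ, P ((T ^ (k+1)) ξ)⟫_ℂ = ⟪(T ^ k) ξ, P ((T ^ (k + 2)) ξ)⟫_ℂ := by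
      rw [← happ k ξ]
      rw [hTmove ((T ^ k) ξ) (P (T ((T ^ k) ξ)))]
      rw [← hPT (T ((T ^ k) ξ))]
      rw [happ k ξ, happ (k + 1) ξ]
    rw [← e1, hgs ((T ^ (k + 1)) ξ)]
    exact (Complex.ofReal_re _).symm
  have hβsq : ∀ k, β (k + 1) ^ 2 ≤ β k * β (k + 2) := by
    intro k
    have h1 : β (k + 1) ≤ ‖⟪(T ^ k) ξ, P ((T ^ (k + 2)) ξ)⟫_ℂ‖ := by
      rw [hβre k]
      exact RCLike.re_le_norm _
    have h2 : β (k + 1) ^ 2 ≤ ‖⟪(T ^ k) ξ, P ((T ^ (k + 2)) ξ)⟫_ℂ‖ ^ 2 :=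
      pow_le_pow_left₀ (hβnn _) h1 2
    exact le_trans h2 (hCS _ _)
  have hTk : ∀ k : ℕ, ‖(T ^ k) ξ‖ ≤ (2⁻¹ : ℝ) ^ k := by
    intro k
    induction k with
    | zero => simp [hξ1]
    | succ n ih =>
      rw [← happ n ξ]
      calc ‖T ((T ^ n) ξ)‖ ≤ ‖T‖ * ‖(T ^ n) ξ‖ := T.le_opNorm _
      _ ≤ 2⁻¹ * (2⁻¹ : ℝ) ^ n := mul_le_mul hTn ih (norm_nonneg _) (by norm_num)
      _ = (2⁻¹ : ℝ) ^ (n + 1) := by ring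
  have hβb : ∀ k, β k ≤ ‖P‖ * ((4 : ℝ)⁻¹) ^ k := by
    intro k
    have h0 : ((β k : ℝ) : ℂ) = ⟪(T ^ k) ξ, P ((T ^ k) ξ)⟫_ℂ := (hgs _).symm
    have h1 : β k ≤ ‖⟪(T ^ k) ξ, P ((T ^ k) ξ)⟫_ℂ‖ := by
      have hre : RCLike.re ⟪(T ^ k) ξ, P ((T ^ k) ξ)⟫_ℂ = β k := by
        rw [← h0]
        simp
      rw [← hre]
      exact RCLike.re_le_norm _
    have h2 : ‖⟪(T ^ k) ξ, P ((T ^ k) ξ)⟫_ℂ‖ ≤ ‖(T ^ k) ξ‖ * (‖P‖ * ‖(T ^ k) ξ‖) :=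
      le_trans (norm_inner_le_norm _ _)
        (mul_le_mul_of_nonneg_left (P.le_opNorm ((T ^ k) ξ)) (norm_nonneg _))
    have h3 := hTk k
    have h4 : (0:ℝ) ≤ ‖(T ^ k) ξ‖ := norm_nonneg _
    have h5 : (0:ℝ) ≤ ‖P‖ := norm_nonneg _
    have hx2 : ‖(T ^ k) ξ‖ * ‖(T ^ k) ξ‖ ≤ (2⁻¹:ℝ) ^ k * (2⁻¹:ℝ) ^ k :=
      mul_le_mul h3 h3 h4 (pow_nonneg (by norm_num) k)
    have h6 : ‖(T ^ k) ξ‖ * (‖P‖ * ‖(T ^ k) ξ‖) ≤ ‖P‖ * ((2⁻¹:ℝ) ^ k * (2⁻¹:ℝ) ^ k) := by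
      calc ‖(T ^ k) ξ‖ * (‖P‖ * ‖(T ^ k) ξ‖) = ‖P‖ * (‖(T ^ k) ξ‖ * ‖(T ^ k) ξ‖) := by ring
      _ ≤ ‖P‖ * ((2⁻¹:ℝ) ^ k * (2⁻¹:ℝ) ^ k) := mul_le_mul_of_nonneg_left hx2 h5
    have h7 : ((2⁻¹:ℝ) ^ k * (2⁻¹:ℝ) ^ k) = ((4:ℝ)⁻¹) ^ k := by
      rw [← mul_pow]
      norm_num
    calc β k ≤ ‖(T ^ k) ξ‖ * (‖P‖ * ‖(T ^ k) ξ‖) := le_trans h1 h2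
    _ ≤ ‖P‖ * ((2⁻¹:ℝ) ^ k * (2⁻¹:ℝ) ^ k) := h6
    _ = ‖P‖ * ((4:ℝ)⁻¹) ^ k := by rw [h7]
  have hββ : β 1 ≤ β 0 := by
    by_contra hlt
    push_neg at hlt
    have hβ1pos : 0 < β 1 := lt_of_le_of_lt (hβnn 0) hlt
    rcases eq_or_lt_of_le (hβnn 0) with h0 | hβ0pos
    · have h := hβsq 0
      rw [← h0, zero_mul] at h
      nlinarith
    · set q : ℝ := β 1 / β 0 with hqdef
      have hq : 1 < q := (one_lt_div hβ0pos).mpr hlt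
      have hinv : ∀ k, 0 < β k ∧ q * β k ≤ β (k + 1) := by
        intro k
        induction k with
        | zero =>
          refine ⟨hβ0pos, ?_⟩
          rw [hqdef, div_mul_cancel₀]
          exact ne_of_gt hβ0pos
        | succ n ih =>
          obtain ⟨hpos, hstep⟩ := ih
          have hq0 : 0 < q := lt_trans one_pos hq
          have hnext : 0 < β (n + 1) := lt_of_lt_of_le (by positivity) hstep
          refine ⟨hnext, ?_⟩
          have hsq := hβsq n
          nlinarith
      have hgeo : ∀ k, β 0 * q ^ k ≤ β k := by
        intro k
        induction k with
        | zero => simp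
        | succ n ih =>
          have h1 := (hinv n).2
          have hq0 : (0:ℝ) < q := lt_trans one_pos hq
          calc β 0 * q ^ (n + 1) = q * (β 0 * q ^ n) := by ring
          _ ≤ q * β n := by nlinarith
          _ ≤ β (n + 1) := h1
      obtain ⟨n, hn⟩ := pow_unbounded_of_one_lt (‖P‖ / β 0) hq
      have h1 : ‖P‖ < β 0 * q ^ n := by
        rw [div_lt_iff₀ hβ0pos] at hn
        linarith [hn]
      have h2 : β n ≤ ‖P‖ := by
        have h3 := hβb n
        have h4 : ((4:ℝ)⁻¹) ^ n ≤ 1 := pow_le_one₀ (by norm_num) (by norm_num)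
        have h5 : ‖P‖ * ((4:ℝ)⁻¹) ^ n ≤ ‖P‖ * 1 :=
          mul_le_mul_of_nonneg_left h4 (norm_nonneg P)
        rw [mul_one] at h5
        exact le_trans h3 h5
      linarith [hgeo n]
  have e0 : β 0 = ‖Q1 ξ‖ ^ 2 + ‖Q2 ξ‖ ^ 2 := by simp [hβdef, hgdef]
  have e1 : β 1 = ‖Q1 (T ξ)‖ ^ 2 + ‖Q2 (T ξ)‖ ^ 2 := by simp [hβdef, hgdef]
  rw [← e0, ← e1]
  exact hββ

set_option maxHeartbeats 1600000 in
/-- Proposition 2.1.  Let `(A, θ)` be a `ℤ₂`-graded C*-algebra and `φ` a pure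
even state on `A` such that the GNS representations `π_φ` (on `H` with cyclic vector `ξ`) and
`π_{φ∘θ}` (on `H'` with cyclic vector `ξ'`) are not disjoint.  Then there is a self-adjoint
unitary `U` in the double commutant `π_φ(A₊)''` of the image of the even part `A₊ = {a | θ a = a}`
such that `U π_φ(a) U* = π_φ(θ a)` for all `a` and `⟨U ξ_φ, ξ_φ⟩ ≥ 0`. -/
theorem statement0
    {A : Type*} [NormedRing A] [StarRing A] [CStarRing A] [NormedAlgebra ℂ A]
    [StarModule ℂ A] [CompleteSpace A]
    (θ : A ≃⋆ₐ[ℂ] A) (hθ : ∀ a, θ (θ a) = a)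
    (φ : A →ₗ[ℂ] ℂ) (hpure : IsPureState φ)
    (heven : ∀ a, φ (θ a) = φ a)
    {H H' : Type*} [NormedAddCommGroup H] [InnerProductSpace ℂ H] [CompleteSpace H]
    [NormedAddCommGroup H'] [InnerProductSpace ℂ H'] [CompleteSpace H']
    -- a GNS triple `(H, π, ξ)` for `φ`
    (π : A →⋆ₐ[ℂ] (H →L[ℂ] H)) (ξ : H)
    (hcyc : Dense (Set.range fun a : A => π a ξ))
    (hGNS : ∀ a : A, φ a = ⟪ξ, π a ξ⟫_ℂ)
    -- a GNS triple `(H', π', ξ')` for `φ ∘ θ`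
    (π' : A →⋆ₐ[ℂ] (H' →L[ℂ] H')) (ξ' : H')
    (hcyc' : Dense (Set.range fun a : A => π' a ξ'))
    (hGNS' : ∀ a : A, φ (θ a) = ⟪ξ', π' a ξ'⟫_ℂ)
    -- `π_φ` and `π_{φ∘θ}` are not disjoint
    (hnotdisj : ∃ T : H →L[ℂ] H', T ≠ 0 ∧ ∀ a : A, T.comp (π a) = (π' a).comp T) :
    ∃ U : H →L[ℂ] H, star U = U ∧ U * U = 1 ∧
      U ∈ Set.centralizer (Set.centralizer ((fun a : A => π a) '' {a : A | θ a = a})) ∧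
      (∀ a : A, U * π a * star U = π (θ a)) ∧ 0 ≤ ⟪U ξ, ξ⟫_ℂ := by
  -- basic facts about the state
  have hst : IsState φ := hpure.1
  have hφ1 : φ 1 = 1 := hst.1
  -- inner products of GNS vectors
  have hip : ∀ a b : A, ⟪π a ξ, π b ξ⟫_ℂ = φ (star a * b) := by
    intro a b
    rw [hGNS (star a * b), map_mul, ContinuousLinearMap.mul_apply, map_star,
      ContinuousLinearMap.star_eq_adjoint, ContinuousLinearMap.adjoint_inner_right]
  -- θ preserves GNS norms
  have hθn : ∀ a : A, ‖π (θ a) ξ‖ = ‖π a ξ‖ := by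
    intro a
    have h1 : ⟪π (θ a) ξ, π (θ a) ξ⟫_ℂ = ⟪π a ξ, π a ξ⟫_ℂ := by
      rw [hip, hip]
      have : star (θ a) * θ a = θ (star a * a) := by
        rw [map_mul, map_star]
      rw [this, heven]
    have h3 : (‖π (θ a) ξ‖ : ℝ) ^ 2 = (‖π a ξ‖ : ℝ) ^ 2 := by
      have := congrArg RCLike.re h1
      rwa [inner_self_eq_norm_sq, inner_self_eq_norm_sq] at this
    nlinarith [norm_nonneg (π (θ a) ξ), norm_nonneg (π a ξ)]
  -- construct U
  let J : A →ₗ[ℂ] H :=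
    { toFun := fun a => π a ξ
      map_add' := by intro a b; simp [map_add, ContinuousLinearMap.add_apply]
      map_smul' := by intro c a; simp [map_smul] }
  let L : A →ₗ[ℂ] H :=
    { toFun := fun a => π (θ a) ξ
      map_add' := by intro a b; simp [map_add, ContinuousLinearMap.add_apply]
      map_smul' := by intro c a; simp [map_smul] }
  obtain ⟨U, hU⟩ := exists_clm_extension J L (fun a => hθn a) hcyc
  have hU : ∀ a : A, U (π a ξ) = π (θ a) ξ := hU
  -- extensionality from density
  have hext : ∀ F G : H →L[ℂ] H, (∀ a : A, F (π a ξ) = G (π a ξ)) → F = G := by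
    intro F G h
    apply ContinuousLinearMap.coeFn_injective
    refine Continuous.ext_on hcyc F.continuous G.continuous ?_
    rintro x ⟨a, rfl⟩
    exact h a
  -- U is an involution
  have hUU : U * U = 1 := by
    apply hext
    intro a
    rw [ContinuousLinearMap.mul_apply, hU, hU, hθ, ContinuousLinearMap.one_apply]
  -- U is self-adjoint
  have hinner : ∀ x y : H, ⟪U x, y⟫_ℂ = ⟪x, U y⟫_ℂ := by
    have hdd : ∀ a b : A, ⟪U (π a ξ), π b ξ⟫_ℂ = ⟪π a ξ, U (π b ξ)⟫_ℂ := by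
      intro a b
      rw [hU, hU, hip, hip]
      have h1 : star (θ a) * b = θ (star a * θ b) := by
        rw [map_mul, map_star, hθ]
      rw [h1, heven]
    have hstep1 : ∀ (a : A) (y : H), ⟪U (π a ξ), y⟫_ℂ = ⟪π a ξ, U y⟫_ℂ := by
      intro a
      have hc1 : Continuous fun y : H => ⟪U (π a ξ), y⟫_ℂ :=
        continuous_const.inner continuous_id
      have hc2 : Continuous fun y : H => ⟪π a ξ, U y⟫_ℂ :=
        continuous_const.inner U.continuous
      have := Continuous.ext_on hcyc hc1 hc2 (by rintro y ⟨b, rfl⟩; exact hdd a b)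
      exact fun y => congrFun this y
    intro x y
    have hc1 : Continuous fun x : H => ⟪U x, y⟫_ℂ :=
      (U.continuous).inner continuous_const
    have hc2 : Continuous fun x : H => ⟪x, U y⟫_ℂ :=
      continuous_id.inner continuous_const
    have := Continuous.ext_on hcyc hc1 hc2 (by rintro x ⟨a, rfl⟩; exact hstep1 a y)
    exact congrFun this x
  have hsa : star U = U := by
    rw [ContinuousLinearMap.star_eq_adjoint]
    exact ((ContinuousLinearMap.eq_adjoint_iff U U).mpr hinner).symm
  -- U implements θ
  have hcomm : ∀ a : A, U * π a * star U = π (θ a) := by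
    intro a
    rw [hsa]
    apply hext
    intro b
    rw [ContinuousLinearMap.mul_apply, ContinuousLinearMap.mul_apply, hU]
    have h1 : (π a) (π (θ b) ξ) = π (a * θ b) ξ := by
      rw [map_mul, ContinuousLinearMap.mul_apply]
    rw [h1, hU]
    have h2 : θ (a * θ b) = θ a * b := by rw [map_mul, hθ]
    rw [h2, map_mul, ContinuousLinearMap.mul_apply]
  have hcomm' : ∀ a : A, U * π a = π (θ a) * U := by
    intro a
    have hc : U * π a * U = π (θ a) := by have h := hcomm a; rwa [hsa] at h
    calc U * π a = U * π a * (U * U) := by rw [hUU, mul_one]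
    _ = (U * π a * U) * U := by rw [← mul_assoc]
    _ = π (θ a) * U := by rw [hc]
  have hUpi : ∀ (a : A) (x : H), U (π a x) = π (θ a) (U x) := by
    intro a x
    have := congrArg (fun F : H →L[ℂ] H => F x) (hcomm' a)
    simpa [ContinuousLinearMap.mul_apply] using this
  -- U fixes ξ
  have hUξ : U ξ = ξ := by
    have h1 : π 1 ξ = ξ := by rw [map_one, ContinuousLinearMap.one_apply]
    rw [← h1, hU, map_one]
  have hξξ : ⟪ξ, ξ⟫_ℂ = 1 := by
    have h0 := (hGNS 1).symm.trans hφ1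
    simpa [map_one] using h0
  have hξ1 : ‖ξ‖ = 1 := by
    have h2 : (‖ξ‖ : ℝ) ^ 2 = 1 := by
      have := congrArg RCLike.re hξξ
      rwa [inner_self_eq_norm_sq, RCLike.one_re] at this
    nlinarith [norm_nonneg ξ]
  -- orthogonality of even and odd vectors
  have horth : ∀ x y : H, U x = x → U y = -y → ⟪x, y⟫_ℂ = 0 := by
    intro x y hx hy
    have h1 : ⟪x, y⟫_ℂ = -⟪x, y⟫_ℂ := by
      calc ⟪x, y⟫_ℂ = ⟪U x, y⟫_ℂ := by rw [hx]
      _ = ⟪x, U y⟫_ℂ := hinner x y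
      _ = -⟪x, y⟫_ℂ := by rw [hy, inner_neg_right]
    linear_combination h1 / 2
  -- move a self-adjoint operator across the inner product
  have hmove : ∀ T : H →L[ℂ] H, star T = T → ∀ x y : H, ⟪T x, y⟫_ℂ = ⟪x, T y⟫_ℂ := by
    intro T hT x y
    conv_lhs => rw [← hT]
    rw [ContinuousLinearMap.star_eq_adjoint, ContinuousLinearMap.adjoint_inner_left]
  have hip_self : ∀ x : H, 0 ≤ ⟪x, x⟫_ℂ := by
    intro x
    rw [RCLike.nonneg_iff]
    exact ⟨inner_self_nonneg, inner_self_im x⟩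
  have hre_self : ∀ x : H, ⟪x, x⟫_ℂ = ((‖x‖ ^ 2 : ℝ) : ℂ) := by
    intro x
    rw [inner_self_eq_norm_sq_to_K]
    norm_cast
  have hpadj : ∀ (a : A) (x y : H), ⟪π a x, y⟫_ℂ = ⟪x, π (star a) y⟫_ℂ := by
    intro a x y
    rw [map_star, ContinuousLinearMap.star_eq_adjoint]
    exact (ContinuousLinearMap.adjoint_inner_right _ _ _).symm
  have hφodd : ∀ a : A, θ a = -a → φ a = 0 := by
    intro a ha
    have h := heven a
    rw [ha, map_neg] at h
    linear_combination - h / 2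
  have hdecomp : ∀ a : A, ∃ ae ao : A, θ ae = ae ∧ θ ao = -ao ∧ ae + ao = a := by
    intro a
    refine ⟨(2⁻¹ : ℂ) • (a + θ a), (2⁻¹ : ℂ) • (a - θ a), ?_, ?_, ?_⟩
    · rw [map_smul, map_add, hθ, add_comm]
    · rw [map_smul, map_sub, hθ, ← smul_neg, neg_sub]
    · rw [← smul_add]
      have : a + θ a + (a - θ a) = (2 : ℂ) • a := by
        rw [two_smul]
        abel
      rw [this, smul_smul]
      norm_num
  -- vector functionals
  let mkf : H → (A →ₗ[ℂ] ℂ) := fun v =>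
    { toFun := fun a => ⟪v, π a v⟫_ℂ
      map_add' := by intro a b; simp [map_add, ContinuousLinearMap.add_apply, inner_add_right]
      map_smul' := by intro s a; simp [map_smul, inner_smul_right] }
  have hmkf : ∀ (v : H) (a : A), mkf v a = ⟪v, π a v⟫_ℂ := fun v a => rfl
  have hmkfpos : ∀ (v : H) (a : A), mkf v (star a * a) = ((‖π a v‖ ^ 2 : ℝ) : ℂ) := by
    intro v a
    rw [hmkf, map_mul, ContinuousLinearMap.mul_apply, ← hpadj a v _, hre_self]
  -- the heart: an odd self-adjoint element of the commutant of the even part kills ξ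
  have hcore : ∀ T : H →L[ℂ] H,
      (∀ a : A, θ a = a → π a * T = T * π a) → star T = T → U * T = -(T * U) →
      ‖T‖ ≤ 2⁻¹ → T ξ = 0 := by
    intro T hTc hTsa hTanti hTn
    by_contra hη0
    set η := T ξ with hηdef
    have hηn0 : η ≠ 0 := hη0
    have hcpos : (0 : ℝ) < ‖η‖ ^ 2 := by
      have := norm_pos_iff.mpr hηn0
      positivity
    set c : ℝ := ‖η‖ ^ 2 with hcdef
    have hc1 : c ≤ 4⁻¹ := by
      have h1 : ‖η‖ ≤ ‖T‖ * ‖ξ‖ := T.le_opNorm ξ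
      rw [hξ1, mul_one] at h1
      have h2 := le_trans h1 hTn
      have h3 : (0:ℝ) ≤ ‖η‖ := norm_nonneg _
      rw [hcdef]
      nlinarith
    have hUη : U η = -η := by
      have h := congrArg (fun F : H →L[ℂ] H => F ξ) hTanti
      simpa [ContinuousLinearMap.mul_apply, hUξ] using h
    have hTcv : ∀ a : A, θ a = a → ∀ x : H, π a (T x) = T (π a x) := by
      intro a ha x
      have h := congrArg (fun F : H →L[ℂ] H => F x) (hTc a ha)
      simpa [ContinuousLinearMap.mul_apply] using h
    -- the key inequality
    have hbeta : ∀ a : A, ‖π a η‖ ^ 2 + ‖π (θ a) η‖ ^ 2 ≤ ‖π a ξ‖ ^ 2 + ‖π (θ a) ξ‖ ^ 2 := by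
      intro a
      set m : A := star a * a + star (θ a) * θ a with hm
      have hmeven : θ m = m := by
        simp only [hm, map_add, map_mul, map_star, hθ]
        exact add_comm _ _
      have hPT : ∀ x : H, (π m) (T x) = T ((π m) x) := fun x => hTcv m hmeven x
      have hs : ∀ u v : H, ⟪u, (π m) v⟫_ℂ = ⟪π a u, π a v⟫_ℂ + ⟪π (θ a) u, π (θ a) v⟫_ℂ := by
        intro u v
        rw [hm, map_add, ContinuousLinearMap.add_apply, inner_add_right,
          map_mul, map_mul, ContinuousLinearMap.mul_apply, ContinuousLinearMap.mul_apply,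
          ← hpadj a u _, ← hpadj (θ a) u _]
      exact beta_lemma T (π m) (π a) (π (θ a)) ξ hs hPT (hmove T hTsa) hTn hξ1
    -- the functional χ
    let χ : A →ₗ[ℂ] ℂ :=
      { toFun := fun b => (⟪η, π b η⟫_ℂ + ⟪η, π (θ b) η⟫_ℂ) / 2
        map_add' := by
          intro x y
          simp only [map_add, ContinuousLinearMap.add_apply, inner_add_right]
          ring
        map_smul' := by
          intro s x
          simp only [map_smul, ContinuousLinearMap.smul_apply, inner_smul_right,
            RingHom.id_apply, smul_eq_mul]
          ring }
    have hχ : ∀ b : A, χ b = (⟪η, π b η⟫_ℂ + ⟪η, π (θ b) η⟫_ℂ) / 2 := fun b => rfl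
    have hχsq : ∀ b : A, χ (star b * b) = (((‖π b η‖ ^ 2 + ‖π (θ b) η‖ ^ 2) / 2 : ℝ) : ℂ) := by
      intro b
      rw [hχ]
      have e1 : ⟪η, π (star b * b) η⟫_ℂ = ((‖π b η‖ ^ 2 : ℝ) : ℂ) := by
        rw [map_mul, ContinuousLinearMap.mul_apply, ← hpadj b η _, hre_self]
      have e2 : ⟪η, π (θ (star b * b)) η⟫_ℂ = ((‖π (θ b) η‖ ^ 2 : ℝ) : ℂ) := by
        have e3 : θ (star b * b) = star (θ b) * θ b := by rw [map_mul, map_star]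
        rw [e3, map_mul, ContinuousLinearMap.mul_apply, ← hpadj (θ b) η _, hre_self]
      rw [e1, e2]
      push_cast
      ring
    have hφsq : ∀ b : A, φ (star b * b) = (((‖π b ξ‖ ^ 2 + ‖π (θ b) ξ‖ ^ 2) / 2 : ℝ) : ℂ) := by
      intro b
      have e1 : φ (star b * b) = ((‖π b ξ‖ ^ 2 : ℝ) : ℂ) := by
        rw [← hip b b, hre_self]
      rw [e1, hθn b]
      push_cast
      ring
    have hcne : (c : ℝ) ≠ 0 := ne_of_gt hcpos
    have h1c : (0 : ℝ) < 1 - c := by linarith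
    have hχ1 : χ 1 = ((c : ℝ) : ℂ) := by
      rw [hχ]
      simp only [map_one, ContinuousLinearMap.one_apply]
      rw [hre_self η, ← hcdef]
      ring
    have hstχ : ∀ b : A, χ (star b * b) ≤ φ (star b * b) := by
      intro b
      rw [hχsq, hφsq, Complex.real_le_real]
      have := hbeta b
      linarith
    have hχpos : ∀ b : A, 0 ≤ χ (star b * b) := by
      intro b
      rw [hχsq, ← Complex.ofReal_zero, Complex.real_le_real]
      positivity
    set ψ₁ : A →ₗ[ℂ] ℂ := (c⁻¹ : ℝ) • χ with hψ₁
    set ψ₂ : A →ₗ[ℂ] ℂ := ((1 - c)⁻¹ : ℝ) • (φ - χ) with hψ₂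
    have hIs1 : IsState ψ₁ := by
      constructor
      · rw [hψ₁, LinearMap.smul_apply, hχ1, Complex.real_smul, ← Complex.ofReal_mul,
          inv_mul_cancel₀ hcne, Complex.ofReal_one]
      · intro b
        rw [hψ₁, LinearMap.smul_apply, hχsq, Complex.real_smul, ← Complex.ofReal_mul,
          ← Complex.ofReal_zero, Complex.real_le_real]
        positivity
    have hIs2 : IsState ψ₂ := by
      constructor
      · rw [hψ₂, LinearMap.smul_apply, LinearMap.sub_apply, hφ1, hχ1, Complex.real_smul]
        rw [show (1 : ℂ) - ((c:ℝ):ℂ) = (((1 - c : ℝ)) : ℂ) by push_cast; ring]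
        rw [← Complex.ofReal_mul, inv_mul_cancel₀ (ne_of_gt h1c), Complex.ofReal_one]
      · intro b
        rw [hψ₂, LinearMap.smul_apply, LinearMap.sub_apply, hφsq, hχsq, Complex.real_smul]
        rw [show ((((‖π b ξ‖ ^ 2 + ‖π (θ b) ξ‖ ^ 2) / 2 : ℝ)) : ℂ)
            - (((‖π b η‖ ^ 2 + ‖π (θ b) η‖ ^ 2) / 2 : ℝ) : ℂ)
            = ((((‖π b ξ‖ ^ 2 + ‖π (θ b) ξ‖ ^ 2) / 2
              - (‖π b η‖ ^ 2 + ‖π (θ b) η‖ ^ 2) / 2 : ℝ)) : ℂ) by push_cast; ring]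
        rw [← Complex.ofReal_mul, ← Complex.ofReal_zero, Complex.real_le_real]
        have := hbeta b
        have h1cnn : (0:ℝ) ≤ (1 - c)⁻¹ := le_of_lt (inv_pos.mpr h1c)
        have : (0:ℝ) ≤ (‖π b ξ‖ ^ 2 + ‖π (θ b) ξ‖ ^ 2) / 2
            - (‖π b η‖ ^ 2 + ‖π (θ b) η‖ ^ 2) / 2 := by linarith
        positivity
    have hseg : φ ∈ openSegment ℝ ψ₁ ψ₂ := by
      refine ⟨c, 1 - c, hcpos, h1c, by ring, ?_⟩
      rw [hψ₁, hψ₂, smul_smul, smul_smul, mul_inv_cancel₀ hcne,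
        mul_inv_cancel₀ (ne_of_gt h1c), one_smul, one_smul]
      exact add_sub_cancel χ φ
    have h₁ := (mem_extremePoints.mp hpure).2 _ hIs1 _ hIs2 hseg |>.1
    have hχφ : χ = (c : ℝ) • φ := by
      rw [← h₁, hψ₁, smul_smul, mul_inv_cancel₀ hcne, one_smul]
    have hηall : ∀ b : A, ⟪η, π b η⟫_ℂ = ((c:ℝ):ℂ) * φ b := by
      intro b
      obtain ⟨be, bo, hbe, hbo, hbsum⟩ := hdecomp b
      have he : ⟪η, π be η⟫_ℂ = ((c:ℝ):ℂ) * φ be := by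
        have h := congrArg (fun f : A →ₗ[ℂ] ℂ => f be) hχφ
        simp only [LinearMap.smul_apply] at h
        rw [hχ, hbe, Complex.real_smul] at h
        linear_combination h
      have ho : ⟪η, π bo η⟫_ℂ = 0 := by
        have hx : U (π bo η) = π bo η := by
          rw [hUpi bo η, hUη, hbo, map_neg]
          simp
        rw [inner_eq_zero_symm]
        exact horth _ _ hx hUη
      have hfo : φ bo = 0 := hφodd bo hbo
      rw [← hbsum, map_add, map_add, ContinuousLinearMap.add_apply, inner_add_right,
        he, ho, hfo]
      ring
    -- the normalized odd vector
    set η' : H := ((‖η‖⁻¹ : ℝ) : ℂ) • η with hη'def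
    have hηnorm0 : ‖η‖ ≠ 0 := norm_ne_zero_iff.mpr hηn0
    have hUη' : U η' = -η' := by rw [hη'def, map_smul, hUη, smul_neg]
    have hη'η' : ⟪η', η'⟫_ℂ = 1 := by
      rw [hη'def, inner_smul_left, inner_smul_right, Complex.conj_ofReal, hre_self]
      rw [← Complex.ofReal_mul, ← Complex.ofReal_mul]
      rw [show (‖η‖⁻¹ * (‖η‖⁻¹ * ‖η‖ ^ 2) : ℝ) = 1 by field_simp]
      exact Complex.ofReal_one
    have hη'all : ∀ b : A, ⟪η', π b η'⟫_ℂ = φ b := by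
      intro b
      rw [hη'def, map_smul, inner_smul_left, inner_smul_right, Complex.conj_ofReal, hηall b]
      have hfac : ((‖η‖⁻¹ : ℝ) : ℂ) * (((‖η‖⁻¹ : ℝ) : ℂ) * ((c:ℝ):ℂ)) = 1 := by
        rw [← Complex.ofReal_mul, ← Complex.ofReal_mul]
        rw [show (‖η‖⁻¹ * (‖η‖⁻¹ * c) : ℝ) = 1 by rw [hcdef]; field_simp]
        exact Complex.ofReal_one
      linear_combination (φ b) * hfac
    -- a state from a unit-like vector
    have hstate_v : ∀ v : H, ⟪v, v⟫_ℂ = 2 → IsState ((2⁻¹ : ℝ) • mkf v) := by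
      intro v hv
      constructor
      · rw [LinearMap.smul_apply, hmkf, map_one, ContinuousLinearMap.one_apply, hv,
          Complex.real_smul]
        norm_num
      · intro b
        rw [LinearMap.smul_apply, hmkfpos, Complex.real_smul, ← Complex.ofReal_mul,
          ← Complex.ofReal_zero, Complex.real_le_real]
        positivity
    -- extremality round for an odd unit vector
    have hround : ∀ y : H, U y = -y → ⟪y, y⟫_ℂ = 1 → (∀ b, ⟪y, π b y⟫_ℂ = φ b) →
        ∀ b : A, ⟪ξ, π b y⟫_ℂ + ⟪y, π b ξ⟫_ℂ = 0 := by
      intro y hUy hyy hyφ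
      have hξy : ⟪ξ, y⟫_ℂ = 0 := horth ξ y hUξ hUy
      have hyξ : ⟪y, ξ⟫_ℂ = 0 := inner_eq_zero_symm.mp hξy
      have hv1 : ⟪ξ + y, ξ + y⟫_ℂ = 2 := by
        rw [inner_add_add_self, hξξ, hξy, hyξ, hyy]
        norm_num
      have hv2 : ⟪ξ - y, ξ - y⟫_ℂ = 2 := by
        rw [inner_sub_sub_self, hξξ, hξy, hyξ, hyy]
        norm_num
      have hseg2 : φ ∈ openSegment ℝ ((2⁻¹:ℝ) • mkf (ξ + y)) ((2⁻¹:ℝ) • mkf (ξ - y)) := by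
        refine ⟨2⁻¹, 2⁻¹, by norm_num, by norm_num, by norm_num, ?_⟩
        apply LinearMap.ext
        intro b
        simp only [LinearMap.add_apply, LinearMap.smul_apply, hmkf, smul_smul]
        rw [map_add (π b), map_sub (π b), inner_add_right, inner_add_left, inner_add_left,
          inner_sub_right, inner_sub_left, inner_sub_left, ← hGNS b, hyφ b,
          Complex.real_smul, Complex.real_smul]
        push_cast
        ring
      have h₁ := (mem_extremePoints.mp hpure).2 _ (hstate_v _ hv1) _ (hstate_v _ hv2) hseg2 |>.1
      intro b
      have h := congrArg (fun f : A →ₗ[ℂ] ℂ => f b) h₁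
      simp only [LinearMap.smul_apply, hmkf, Complex.real_smul] at h
      rw [map_add (π b), inner_add_right, inner_add_left, inner_add_left,
        ← hGNS b, hyφ b] at h
      push_cast at h
      linear_combination 2 * h
    have hE1 := hround η' hUη' hη'η' hη'all
    have hIy : U (Complex.I • η') = -(Complex.I • η') := by
      rw [map_smul, hUη', smul_neg]
    have hIyy : ⟪Complex.I • η', Complex.I • η'⟫_ℂ = 1 := by
      rw [inner_smul_left, inner_smul_right, hη'η', Complex.conj_I]
      simp [Complex.I_mul_I]
    have hIyφ : ∀ b, ⟪Complex.I • η', π b (Complex.I • η')⟫_ℂ = φ b := by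
      intro b
      rw [map_smul, inner_smul_left, inner_smul_right, hη'all b, Complex.conj_I]
      rw [show -Complex.I * (Complex.I * φ b) = (-(Complex.I * Complex.I)) * φ b by ring]
      simp [Complex.I_mul_I]
    have hE2 := hround (Complex.I • η') hIy hIyy hIyφ
    have hperp0 : ∀ b : A, ⟪ξ, π b η'⟫_ℂ = 0 := by
      intro b
      have e1 := hE1 b
      have e2 := hE2 b
      rw [map_smul, inner_smul_right, inner_smul_left, Complex.conj_I] at e2
      linear_combination e1 / 2 + (- Complex.I / 2) * e2
        + ((⟪ξ, π b η'⟫_ℂ - ⟪η', π b ξ⟫_ℂ) / 2) * Complex.I_sq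
    have hperp : ∀ b : A, ⟪π b ξ, η'⟫_ℂ = 0 := by
      intro b
      rw [hpadj b ξ η']
      exact hperp0 (star b)
    have hallperp : ∀ x : H, ⟪x, η'⟫_ℂ = 0 := by
      have hc1 : Continuous fun x : H => ⟪x, η'⟫_ℂ := continuous_id.inner continuous_const
      have heq := Continuous.ext_on hcyc hc1 continuous_const
        (by rintro x ⟨b, rfl⟩; exact hperp b)
      exact fun x => congrFun heq x
    have : (1 : ℂ) = 0 := by rw [← hη'η']; exact hallperp η'
    exact one_ne_zero this
  -- remove the norm hypothesis by scaling
  have hTξ0 : ∀ T : H →L[ℂ] H,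
      (∀ a : A, θ a = a → π a * T = T * π a) → star T = T → U * T = -(T * U) → T ξ = 0 := by
    intro T hTc hTsa hTanti
    by_cases hT0 : T = 0
    · rw [hT0, ContinuousLinearMap.zero_apply]
    · have hTn0 : (0:ℝ) < ‖T‖ := norm_pos_iff.mpr hT0
      set r : ℝ := (2 * ‖T‖)⁻¹ with hrdef
      have hr0 : (0:ℝ) < r := by rw [hrdef]; positivity
      set T' : H →L[ℂ] H := ((r : ℝ) : ℂ) • T with hT'def
      have h1 : ∀ a : A, θ a = a → π a * T' = T' * π a := by
        intro a ha
        rw [hT'def, mul_smul_comm, smul_mul_assoc, hTc a ha]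
      have h2 : star T' = T' := by
        rw [hT'def, star_smul, Complex.star_def, Complex.conj_ofReal, hTsa]
      have h3 : U * T' = -(T' * U) := by
        rw [hT'def, mul_smul_comm, smul_mul_assoc, hTanti, smul_neg]
      have h4 : ‖T'‖ ≤ 2⁻¹ := by
        rw [hT'def, norm_smul, Complex.norm_real, Real.norm_eq_abs, abs_of_pos hr0, hrdef]
        rw [show (2 * ‖T‖)⁻¹ * ‖T‖ = 2⁻¹ by field_simp]
      have h5 := hcore T' h1 h2 h3 h4
      rw [hT'def, ContinuousLinearMap.smul_apply] at h5
      have hrne : ((r:ℝ):ℂ) ≠ 0 := by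
        simp only [ne_eq, Complex.ofReal_eq_zero]
        exact ne_of_gt hr0
      exact (smul_eq_zero.mp h5).resolve_left hrne
  -- an odd self-adjoint element of the commutant of the even part is zero
  have hTzero : ∀ T : H →L[ℂ] H,
      (∀ a : A, θ a = a → π a * T = T * π a) → star T = T → U * T = -(T * U) → T = 0 := by
    intro T hTc hTsa hTanti
    have hξ0 := hTξ0 T hTc hTsa hTanti
    have hTcv : ∀ a : A, θ a = a → ∀ x : H, π a (T x) = T (π a x) := by
      intro a ha x
      have h := congrArg (fun F : H →L[ℂ] H => F x) (hTc a ha)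
      simpa [ContinuousLinearMap.mul_apply] using h
    have hUTv : ∀ x : H, U (T x) = -T (U x) := by
      intro x
      have h := congrArg (fun F : H →L[ℂ] H => F x) hTanti
      simpa [ContinuousLinearMap.mul_apply] using h
    have hvanish : ∀ b : A, T (π b ξ) = 0 := by
      intro b
      obtain ⟨be, bo, hbe, hbo, hbsum⟩ := hdecomp b
      have hTbe : T (π be ξ) = 0 := by
        rw [← hTcv be hbe ξ, hξ0, map_zero]
      have hodd : T (π bo ξ) = 0 := by
        have hkey : ∀ x : H, ⟪x, T (π bo ξ)⟫_ℂ = 0 := by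
          have hc1 : Continuous fun x : H => ⟪x, T (π bo ξ)⟫_ℂ :=
            continuous_id.inner continuous_const
          have heq := Continuous.ext_on hcyc hc1 continuous_const (by
            rintro x ⟨bb, rfl⟩
            show ⟪π bb ξ, T (π bo ξ)⟫_ℂ = 0
            rw [← hmove T hTsa (π bb ξ) (π bo ξ)]
            obtain ⟨ce, co, hce, hco, hcsum⟩ := hdecomp bb
            have hTce : T (π ce ξ) = 0 := by rw [← hTcv ce hce ξ, hξ0, map_zero]
            have hxeven : U (T (π co ξ)) = T (π co ξ) := by
              rw [hUTv, hUpi co ξ, hUξ, hco, map_neg, ContinuousLinearMap.neg_apply,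
                map_neg, neg_neg]
            have hyodd : U (π bo ξ) = -(π bo ξ) := by
              rw [hUpi bo ξ, hUξ, hbo, map_neg, ContinuousLinearMap.neg_apply]
            have hsplit : T (π bb ξ) = T (π co ξ) := by
              rw [← hcsum, map_add, ContinuousLinearMap.add_apply, map_add, hTce, zero_add]
            rw [hsplit]
            exact horth _ _ hxeven hyodd)
          exact fun x => congrFun heq x
        exact inner_self_eq_zero.mp (hkey (T (π bo ξ)))
      rw [← hbsum, map_add, ContinuousLinearMap.add_apply, map_add, hTbe, hodd, add_zero]
    exact hext T 0 (fun b => by rw [hvanish b, ContinuousLinearMap.zero_apply])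
  -- self-adjoint elements of the commutant commute with U
  have hsa_comm : ∀ T : H →L[ℂ] H,
      (∀ a : A, θ a = a → π a * T = T * π a) → star T = T → T * U = U * T := by
    intro T hTc hTsa
    have hUe : ∀ a : A, θ a = a → U * π a = π a * U := by
      intro a ha
      rw [hcomm' a, ha]
    set D : H →L[ℂ] H := T - U * T * U with hDdef
    have hDc : ∀ a : A, θ a = a → π a * D = D * π a := by
      intro a ha
      have e1 : π a * U = U * π a := (hUe a ha).symm
      have e2 : π a * (U * T * U) = U * T * U * π a := by
        calc π a * (U * T * U) = ((π a * U) * T) * U := by rw [← mul_assoc, ← mul_assoc]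
        _ = ((U * π a) * T) * U := by rw [e1]
        _ = (U * (π a * T)) * U := by rw [mul_assoc U (π a) T]
        _ = (U * (T * π a)) * U := by rw [hTc a ha]
        _ = ((U * T) * π a) * U := by rw [← mul_assoc U T (π a)]
        _ = (U * T) * (π a * U) := by rw [mul_assoc (U * T) (π a) U]
        _ = (U * T) * (U * π a) := by rw [e1]
        _ = U * T * U * π a := by rw [← mul_assoc]
      rw [hDdef, mul_sub, sub_mul, hTc a ha, e2]
    have hDsa : star D = D := by
      have h5 : star (U * T * U) = U * T * U := by
        rw [star_mul, star_mul, hsa, hTsa, mul_assoc]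
      rw [hDdef, star_sub, hTsa, h5]
    have hDanti : U * D = -(D * U) := by
      have e1 : U * (U * T * U) = T * U := by
        rw [← mul_assoc, ← mul_assoc, hUU, one_mul]
      have e2 : U * T * U * U = U * T := by
        rw [mul_assoc (U * T) U U, hUU, mul_one]
      rw [hDdef, mul_sub, sub_mul, neg_sub, e1, e2]
    have hD0 : D = 0 := hTzero D hDc hDsa hDanti
    have hTU : T = U * T * U := by
      have h6 : T - U * T * U = 0 := by rw [← hDdef, hD0]
      exact sub_eq_zero.mp h6
    calc T * U = (U * T * U) * U := by rw [← hTU]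
    _ = U * T * (U * U) := by rw [mul_assoc]
    _ = U * T := by rw [hUU, mul_one]
  -- all elements of the commutant commute with U
  have hall_comm : ∀ T : H →L[ℂ] H,
      T ∈ Set.centralizer ((fun a : A => π a) '' {a : A | θ a = a}) → T * U = U * T := by
    intro T hT
    have hTc : ∀ a : A, θ a = a → π a * T = T * π a := by
      intro a ha
      exact hT (π a) ⟨a, ha, rfl⟩
    have hTstarc : ∀ a : A, θ a = a → π a * star T = star T * π a := by
      intro a ha
      have hsae : θ (star a) = star a := by rw [map_star, ha]
      have h := congrArg star (hTc (star a) hsae)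
      have e : star (π (star a)) = π a := by rw [← map_star, star_star]
      rw [star_mul, star_mul, e] at h
      exact h.symm
    have h1 : (T + star T) * U = U * (T + star T) :=
      hsa_comm (T + star T)
        (fun a ha => by rw [mul_add, add_mul, hTc a ha, hTstarc a ha])
        (by rw [star_add, star_star, add_comm])
    have h2 : (Complex.I • (T - star T)) * U = U * (Complex.I • (T - star T)) :=
      hsa_comm (Complex.I • (T - star T))
        (fun a ha => by
          rw [mul_smul_comm, smul_mul_assoc, mul_sub, sub_mul, hTc a ha, hTstarc a ha])
        (by
          rw [star_smul, star_sub, star_star, Complex.star_def, Complex.conj_I, neg_smul,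
            ← smul_neg, neg_sub])
    have h2' : (T - star T) * U = U * (T - star T) := by
      rw [smul_mul_assoc, mul_smul_comm] at h2
      exact smul_right_injective _ Complex.I_ne_zero h2
    have hkey : ∀ x y : H →L[ℂ] H, (x + y) + (x - y) = x + x := by
      intro x y
      abel
    have h3 : (T * U + star T * U) + (T * U - star T * U)
        = (U * T + U * star T) + (U * T - U * star T) := by
      rw [add_mul, mul_add] at h1
      rw [sub_mul, mul_sub] at h2'
      rw [h1, h2']
    rw [hkey, hkey] at h3
    have hdouble : ∀ X Y : H →L[ℂ] H, X + X = Y + Y → X = Y := by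
      intro X Y h
      have e : ∀ Z : H →L[ℂ] H, (2:ℂ)⁻¹ • (Z + Z) = Z := by
        intro Z
        rw [← two_smul ℂ Z, smul_smul]
        norm_num
      calc X = (2:ℂ)⁻¹ • (X + X) := (e X).symm
      _ = (2:ℂ)⁻¹ • (Y + Y) := by rw [h]
      _ = Y := e Y
    exact hdouble _ _ h3
  -- assemble
  refine ⟨U, hsa, hUU, ?_, hcomm, ?_⟩
  · rw [Set.mem_centralizer_iff]
    intro T hT
    exact hall_comm T hT
  · have h7 : ⟪U ξ, ξ⟫_ℂ = 1 := by rw [hUξ, hξξ]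
    rw [h7]
    rw [RCLike.nonneg_iff]
    norm_num

end
end

section
/- Any local action α of P_ℕ on a quasi-local C*-algebra A is a large group of automorphisms: for every symmetric state ω on A and every self-adjoint a ∈ A, the weak-operator closed convex hull of {π_ω(α_σ(a)) : σ ∈ P_ℕ} has nonempty intersection with the commutant π_ω(A)'. -/
set_option maxHeartbeats 1000000
set_option synthInstance.maxHeartbeats 400000


noncomputable section

open scoped ComplexOrder InnerProductSpace
open scoped Topology

def FinPerm : Subgroup (Equiv.Perm ℕ) where
  carrier := {σ : Equiv.Perm ℕ | {n : ℕ | σ n ≠ n}.Finite}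
  one_mem' := by simp
  mul_mem' := by
    intro σ τ hσ hτ
    refine (hσ.union hτ).subset fun n hn => ?_
    simp only [Set.mem_setOf_eq, Set.mem_union]
    by_contra h
    push_neg at h
    exact hn (by simp [Equiv.Perm.mul_apply, h.2, h.1])
  inv_mem' := by
    intro σ hσ
    refine hσ.subset fun n hn => ?_
    simp only [Set.mem_setOf_eq] at hn ⊢
    intro h
    exact hn (by conv_lhs => rw [← h, Equiv.Perm.inv_def, Equiv.symm_apply_apply])

/-- A quasi-local algebra structure over `P₀(ℕ)` on a unital C*-algebra `A`:
a `ℤ₂`-grading `grading` together with an isotonous net `loc` of local (unital, graded)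
C*-subalgebras with dense union, such that homogeneous elements localized in disjoint
regions commute when one of them is even, and anticommute when both are odd. -/
structure QuasiLocalStructure (A : Type*) [NormedRing A] [StarRing A] [NormedAlgebra ℂ A]
    [StarModule ℂ A] where
  grading : A ≃⋆ₐ[ℂ] A
  grading_invol : ∀ a, grading (grading a) = a
  loc : Finset ℕ → StarSubalgebra ℂ A
  loc_mono : ∀ ⦃I J : Finset ℕ⦄, I ⊆ J → loc I ≤ loc J
  loc_grading : ∀ I : Finset ℕ, ∀ a ∈ loc I, grading a ∈ loc I
  loc_dense : Dense (⋃ I : Finset ℕ, (loc I : Set A))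
  loc_commute : ∀ ⦃I J : Finset ℕ⦄, Disjoint I J → ∀ x ∈ loc I, ∀ y ∈ loc J,
      ((grading x = x ∨ grading y = y) → x * y = y * x) ∧
      (grading x = -x → grading y = -y → x * y = -(y * x))

/-- A local action of the group `P_ℕ` of finite permutations of `ℕ` on a quasi-local algebra:
a grading-equivariant action by `*`-automorphisms mapping `A(I)` onto `A(σ(I))`. -/
structure LocalAction {A : Type*} [NormedRing A] [StarRing A] [NormedAlgebra ℂ A]
    [StarModule ℂ A] (Q : QuasiLocalStructure A) where
  act : FinPerm → A ≃⋆ₐ[ℂ] A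
  act_one : ∀ a : A, act 1 a = a
  act_mul : ∀ (σ τ : FinPerm) (a : A), act (σ * τ) a = act σ (act τ a)
  act_grading : ∀ (σ : FinPerm) (a : A), act σ (Q.grading a) = Q.grading (act σ a)
  act_loc : ∀ (σ : FinPerm) (I : Finset ℕ),
      (fun a : A => act σ a) '' (Q.loc I) =
        (Q.loc (I.image fun n => (σ : Equiv.Perm ℕ) n) : Set A)

/-- A symmetric (`P_ℕ`-invariant) state for a local action. -/
def IsSymmetricState {A : Type*} [NormedRing A] [StarRing A] [NormedAlgebra ℂ A]
    [StarModule ℂ A] {Q : QuasiLocalStructure A} (L : LocalAction Q)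
    (ω : A →ₗ[ℂ] ℂ) : Prop :=
  IsState ω ∧ ∀ (σ : FinPerm) (a : A), ω (L.act σ a) = ω a

/-- `T` lies in the closure of the set `C ⊆ B(H)` with respect to the weak operator topology:
every basic WOT-neighbourhood of `T` meets `C`. -/
def MemWOTClosure {H : Type*} [NormedAddCommGroup H] [InnerProductSpace ℂ H]
    (C : Set (H →L[ℂ] H)) (T : H →L[ℂ] H) : Prop :=
  ∀ ε > (0 : ℝ), ∀ (m : ℕ) (y z : Fin m → H),
    ∃ S ∈ C, ∀ i : Fin m, ‖⟪y i, (T - S) (z i)⟫_ℂ‖ < ε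

/-! ### Auxiliary lemmas -/

section AuxAlg

variable {A : Type*}

lemma aux_sum_sq [Ring A] (y : ℕ → A) (n : ℕ)
    (hanti : ∀ j < n, ∀ k < n, j ≠ k → y j * y k = -(y k * y j)) :
    (∑ k ∈ Finset.range n, y k) * (∑ k ∈ Finset.range n, y k)
      = ∑ k ∈ Finset.range n, y k * y k := by
  rw [Finset.sum_mul_sum, ← Finset.sum_product', ← Finset.diag_union_offDiag,
    Finset.sum_union (Finset.disjoint_diag_offDiag _), Finset.sum_diag]
  have h0 : ∑ p ∈ (Finset.range n).offDiag, y p.1 * y p.2 = 0 := by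
    refine Finset.sum_involution (fun p _ => (p.2, p.1)) ?_ ?_ ?_ ?_
    · intro p hp
      rw [Finset.mem_offDiag] at hp
      rw [hanti p.1 (Finset.mem_range.mp hp.1) p.2 (Finset.mem_range.mp hp.2.1) hp.2.2]
      exact neg_add_cancel _
    · intro p hp _
      rw [Finset.mem_offDiag] at hp
      intro hcon
      exact hp.2.2 (congrArg Prod.fst hcon).symm
    · intro p hp
      rw [Finset.mem_offDiag] at hp ⊢
      exact ⟨hp.2.1, hp.1, hp.2.2.symm⟩
    · intro p hp
      rfl
  rw [h0, add_zero]

lemma aux_norm_sum [NormedRing A] [StarRing A] [CStarRing A] (y : ℕ → A) (n : ℕ) (M : ℝ)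
    (hM : 0 ≤ M)
    (hnorm : ∀ k < n, ‖y k‖ ≤ M)
    (hsa : ∀ k < n, star (y k) = y k)
    (hanti : ∀ j < n, ∀ k < n, j ≠ k → y j * y k = -(y k * y j)) :
    ‖∑ k ∈ Finset.range n, y k‖ ≤ Real.sqrt n * M := by
  set z := ∑ k ∈ Finset.range n, y k with hz
  have hzsa : star z = z := by
    rw [hz, star_sum]
    exact Finset.sum_congr rfl fun k hk => hsa k (Finset.mem_range.mp hk)
  have h1 : ‖z‖ * ‖z‖ = ‖z * z‖ := by
    calc ‖z‖ * ‖z‖ = ‖star z * z‖ := CStarRing.norm_star_mul_self.symm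
      _ = ‖z * z‖ := by rw [hzsa]
  have h2 : ‖z * z‖ ≤ (n : ℝ) * (M * M) := by
    rw [hz, aux_sum_sq y n hanti]
    refine (norm_sum_le _ _).trans ?_
    have : ∀ k ∈ Finset.range n, ‖y k * y k‖ ≤ M * M := by
      intro k hk
      refine (norm_mul_le _ _).trans ?_
      exact mul_le_mul (hnorm k (Finset.mem_range.mp hk)) (hnorm k (Finset.mem_range.mp hk))
        (norm_nonneg _) hM
    calc ∑ k ∈ Finset.range n, ‖y k * y k‖ ≤ ∑ _k ∈ Finset.range n, (M * M) :=
          Finset.sum_le_sum this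
      _ = (n : ℝ) * (M * M) := by simp [Finset.sum_const, mul_comm]
  have h3 : ‖z‖ * ‖z‖ ≤ (Real.sqrt n * M) * (Real.sqrt n * M) := by
    rw [h1]
    refine h2.trans (le_of_eq ?_)
    rw [mul_mul_mul_comm, Real.mul_self_sqrt (Nat.cast_nonneg n)]
  nlinarith [norm_nonneg z, Real.sqrt_nonneg (n:ℝ), mul_nonneg (Real.sqrt_nonneg (n:ℝ)) hM]

end AuxAlg

lemma aux_eps_bound {ε c : ℝ} (hε : 0 < ε) (hc : 0 ≤ c) :
    2 * (ε / (8 * (c + 1))) * c ≤ ε / 4 := by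
  have hpos : (0:ℝ) < 8 * (c + 1) := by linarith
  have hd0 : 0 ≤ ε / (8 * (c + 1)) := by positivity
  have hd : ε / (8 * (c + 1)) * (8 * (c + 1)) = ε := div_mul_cancel₀ _ (ne_of_gt hpos)
  nlinarith [hd0, hc]

/-- swap `[0,n)` with `[d, d+n)` where `d = n*(k+1)` -/
def bswapFun (n k : ℕ) : ℕ → ℕ := fun x =>
  if x < n then x + n * (k + 1)
  else if n * (k + 1) ≤ x ∧ x < n * (k + 1) + n then x - n * (k + 1) else x

lemma bswap_d_ge (n k : ℕ) : n ≤ n * (k + 1) := Nat.le_mul_of_pos_right n (Nat.succ_pos k)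

lemma bswapFun_involutive (n k : ℕ) : Function.Involutive (bswapFun n k) := by
  intro x
  unfold bswapFun
  rcases lt_or_ge x n with hx | hx
  · simp only [if_pos hx]
    have h1 : ¬ (x + n * (k + 1) < n) := by
      have := bswap_d_ge n k; omega
    rw [if_neg h1, if_pos ⟨Nat.le_add_left _ _, by omega⟩]
    omega
  · rw [if_neg (not_lt.mpr hx)]
    by_cases h2 : n * (k + 1) ≤ x ∧ x < n * (k + 1) + n
    · rw [if_pos h2, if_pos (by omega)]
      omega
    · rw [if_neg h2, if_neg (not_lt.mpr hx), if_neg h2]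

def bswapPerm (n k : ℕ) : Equiv.Perm ℕ := (bswapFun_involutive n k).toPerm

lemma bswapPerm_apply (n k x : ℕ) : bswapPerm n k x = bswapFun n k x := rfl

lemma bswapPerm_support (n k : ℕ) : {m : ℕ | bswapPerm n k m ≠ m}.Finite := by
  refine Set.Finite.subset (Set.finite_Iio (n * (k + 1) + n)) ?_
  intro x hx
  simp only [Set.mem_setOf_eq, bswapPerm_apply, bswapFun] at hx
  simp only [Set.mem_Iio]
  by_contra h
  push_neg at h
  have h1 : ¬ x < n := by have := bswap_d_ge n k; omega
  rw [if_neg h1, if_neg (by omega)] at hx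
  exact hx rfl

def bswapFinPerm (n k : ℕ) : FinPerm := ⟨bswapPerm n k, bswapPerm_support n k⟩

lemma bswapFinPerm_image {n k : ℕ} {I : Finset ℕ} (hI : I ⊆ Finset.range n) :
    (I.image fun m => (((bswapFinPerm n k) : Equiv.Perm ℕ) m)) ⊆
      Finset.Ico (n * (k + 1)) (n * (k + 1) + n) := by
  intro x hx
  rw [Finset.mem_image] at hx
  obtain ⟨i, hi, rfl⟩ := hx
  have : i < n := Finset.mem_range.mp (hI hi)
  show bswapPerm n k i ∈ _
  rw [bswapPerm_apply, bswapFun, if_pos this, Finset.mem_Ico]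
  omega

/-- Proposition 2.7.  Any local action of `P_ℕ` on a quasi-local C*-algebra
is a large group of automorphisms: for every symmetric state `ω` with GNS triple `(H, π, ξ)`
and every self-adjoint `a ∈ A`, the WOT-closed convex hull of `{π(α_σ(a)) : σ ∈ P_ℕ}` meets
the commutant `π(A)'`. -/
theorem statement4
    {A : Type*} [NormedRing A] [StarRing A] [CStarRing A] [NormedAlgebra ℂ A]
    [StarModule ℂ A] [CompleteSpace A]
    (Q : QuasiLocalStructure A) (L : LocalAction Q)
    (ω : A →ₗ[ℂ] ℂ) (hω : IsSymmetricState L ω)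
    {H : Type*} [NormedAddCommGroup H] [InnerProductSpace ℂ H] [CompleteSpace H]
    (π : A →⋆ₐ[ℂ] (H →L[ℂ] H)) (ξ : H)
    (hcyc : Dense (Set.range fun a : A => π a ξ))
    (hGNS : ∀ a : A, ω a = ⟪ξ, π a ξ⟫_ℂ)
    (a : A) (ha : IsSelfAdjoint a) :
    ∃ T : H →L[ℂ] H,
      MemWOTClosure (convexHull ℝ (Set.range fun σ : FinPerm => (π (L.act σ a) : H →L[ℂ] H))) T ∧
      T ∈ Set.centralizer (Set.range fun b : A => (π b : H →L[ℂ] H)) := by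
  classical
  have hπ : ∀ x : A, ‖π x‖ ≤ ‖x‖ := by
    letI : CStarAlgebra A :=
      { ‹NormedRing A›, ‹StarRing A›, ‹CStarRing A›, ‹NormedAlgebra ℂ A›, ‹StarModule ℂ A›,
        ‹CompleteSpace A› with }
    letI : CStarAlgebra (H →L[ℂ] H) :=
      { (inferInstance : NormedRing (H →L[ℂ] H)), (inferInstance : StarRing (H →L[ℂ] H)),
        (inferInstance : CStarRing (H →L[ℂ] H)), (inferInstance : NormedAlgebra ℂ (H →L[ℂ] H)),
        (inferInstance : StarModule ℂ (H →L[ℂ] H)),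
        (inferInstance : CompleteSpace (H →L[ℂ] H)) with }
    exact fun x => NonUnitalStarAlgHom.norm_apply_le π x
  have hact : ∀ (σ : FinPerm) (x : A), ‖L.act σ x‖ = ‖x‖ := by
    letI : CStarAlgebra A :=
      { ‹NormedRing A›, ‹StarRing A›, ‹CStarRing A›, ‹NormedAlgebra ℂ A›, ‹StarModule ℂ A›,
        ‹CompleteSpace A› with }
    exact fun σ x => StarAlgEquiv.norm_map (L.act σ) x
  -- the averaging operators, as a function of the element being averaged
  set Sx : ℕ → A → (H →L[ℂ] H) :=
    fun n x => (n : ℝ)⁻¹ • ∑ k ∈ Finset.range n, π (L.act (bswapFinPerm n k) x) with hSxdef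
  set S : ℕ → (H →L[ℂ] H) := fun n => Sx n a with hSdef
  have hSxnorm : ∀ (n : ℕ) (x : A), ‖Sx n x‖ ≤ ‖x‖ := by
    intro n x
    rcases Nat.eq_zero_or_pos n with hn | hn
    · simp [hSxdef, hn]
    · have h1 : ‖∑ k ∈ Finset.range n, π (L.act (bswapFinPerm n k) x)‖ ≤ (n : ℝ) * ‖x‖ := by
        refine (norm_sum_le _ _).trans ?_
        calc ∑ k ∈ Finset.range n, ‖π (L.act (bswapFinPerm n k) x)‖
            ≤ ∑ _k ∈ Finset.range n, ‖x‖ := by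
              refine Finset.sum_le_sum fun k _ => ?_
              exact (hπ _).trans (le_of_eq (hact _ _))
          _ = (n : ℝ) * ‖x‖ := by simp [Finset.sum_const]
      calc ‖Sx n x‖ = ‖(n : ℝ)⁻¹‖ * ‖∑ k ∈ Finset.range n, π (L.act (bswapFinPerm n k) x)‖ := by
            rw [hSxdef]; exact norm_smul _ _
        _ ≤ (n : ℝ)⁻¹ * ((n : ℝ) * ‖x‖) := by
            rw [Real.norm_eq_abs, abs_of_nonneg (by positivity)]
            exact mul_le_mul_of_nonneg_left h1 (by positivity)
        _ = ‖x‖ := by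
            rw [← mul_assoc, inv_mul_cancel₀ (by positivity), one_mul]
  have hSxadd : ∀ (n : ℕ) (x y : A), Sx n (x + y) = Sx n x + Sx n y := by
    intro n x y
    simp only [hSxdef, map_add, Finset.sum_add_distrib, smul_add]
  -- membership of the averages in the convex hull
  have hSmem : ∀ n : ℕ, 1 ≤ n →
      S n ∈ convexHull ℝ (Set.range fun σ : FinPerm => (π (L.act σ a) : H →L[ℂ] H)) := by
    intro n hn
    have hpos : (0:ℝ) < ∑ _k ∈ Finset.range n, (1:ℝ) := by
      rw [Finset.sum_const, Finset.card_range, nsmul_eq_mul, mul_one]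
      exact_mod_cast hn
    have hmem := Finset.centerMass_mem_convexHull (R := ℝ) (Finset.range n)
      (w := fun _ => (1 : ℝ))
      (z := fun k => (π (L.act (bswapFinPerm n k) a) : H →L[ℂ] H))
      (s := Set.range fun σ : FinPerm => (π (L.act σ a) : H →L[ℂ] H))
      (fun _ _ => zero_le_one) hpos
      (fun k _ => Set.mem_range.mpr ⟨bswapFinPerm n k, rfl⟩)
    have heq : (Finset.range n).centerMass (fun _ => (1 : ℝ))
        (fun k => (π (L.act (bswapFinPerm n k) a) : H →L[ℂ] H)) = S n := by
      rw [Finset.centerMass, Finset.sum_const, Finset.card_range, nsmul_eq_mul, mul_one]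
      simp only [one_smul]
      rfl
    rwa [heq] at hmem
  -- the key commutator estimate
  have hcomm : ∀ b : A, ∀ ε : ℝ, 0 < ε →
      ∃ N : ℕ, ∀ n ≥ N, ‖π b * S n - S n * π b‖ < ε := by
    intro b ε hε
    obtain ⟨b', hb'mem, hbb'⟩ : ∃ b' ∈ ⋃ I : Finset ℕ, (Q.loc I : Set A),
        ‖b - b'‖ < ε / (8 * (‖a‖ + 1)) := by
      have hb := Q.loc_dense b
      rw [Metric.mem_closure_iff] at hb
      obtain ⟨c, hc, hd⟩ := hb (ε / (8 * (‖a‖ + 1))) (by positivity)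
      exact ⟨c, hc, by rwa [dist_eq_norm] at hd⟩
    obtain ⟨J, hb'J⟩ := Set.mem_iUnion.mp hb'mem
    obtain ⟨a'', ha''mem, haa''⟩ : ∃ a'' ∈ ⋃ I : Finset ℕ, (Q.loc I : Set A),
        ‖a - a''‖ < ε / (8 * (‖b'‖ + 1)) := by
      have hb := Q.loc_dense a
      rw [Metric.mem_closure_iff] at hb
      obtain ⟨c, hc, hd⟩ := hb (ε / (8 * (‖b'‖ + 1))) (by positivity)
      exact ⟨c, hc, by rwa [dist_eq_norm] at hd⟩
    obtain ⟨I₀, ha''I⟩ := Set.mem_iUnion.mp ha''mem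
    have hconj2 : (starRingEnd ℂ) (2 : ℂ)⁻¹ = (2 : ℂ)⁻¹ := by
      rw [map_inv₀, map_ofNat]
    have hnorm2 : ‖(2 : ℂ)⁻¹‖ = 2⁻¹ := by
      simp
    set a' : A := (2 : ℂ)⁻¹ • (a'' + star a'') with ha'def
    have ha'mem : a' ∈ Q.loc I₀ :=
      SMulMemClass.smul_mem _ (add_mem ha''I (star_mem ha''I))
    have ha'sa : star a' = a' := by
      rw [ha'def, star_smul, star_add, star_star, RCLike.star_def, hconj2, add_comm]
    have haa' : ‖a - a'‖ < ε / (8 * (‖b'‖ + 1)) := by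
      have hrw : a - a' = (2 : ℂ)⁻¹ • ((a - a'') + star (a - a'')) := by
        rw [star_sub, ha.star_eq, ha'def]
        module
      calc ‖a - a'‖ = ‖(2:ℂ)⁻¹‖ * ‖(a - a'') + star (a - a'')‖ := by rw [hrw, norm_smul]
        _ ≤ 2⁻¹ * (‖a - a''‖ + ‖star (a - a'')‖) := by
            rw [hnorm2]
            exact mul_le_mul_of_nonneg_left (norm_add_le _ _) (by norm_num)
        _ = ‖a - a''‖ := by rw [norm_star]; ring
        _ < _ := haa''
    set ap : A := (2 : ℂ)⁻¹ • (a' + Q.grading a') with hapdef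
    set am : A := (2 : ℂ)⁻¹ • (a' - Q.grading a') with hamdef
    have hapmem : ap ∈ Q.loc I₀ :=
      SMulMemClass.smul_mem _ (add_mem ha'mem (Q.loc_grading _ _ ha'mem))
    have hammem : am ∈ Q.loc I₀ :=
      SMulMemClass.smul_mem _ (sub_mem ha'mem (Q.loc_grading _ _ ha'mem))
    have hsplit : ap + am = a' := by rw [hapdef, hamdef]; module
    have hgap : Q.grading ap = ap := by
      rw [hapdef, map_smul, map_add, Q.grading_invol a', add_comm]
    have hgam : Q.grading am = -am := by
      rw [hamdef, map_smul, map_sub, Q.grading_invol a', ← smul_neg, neg_sub]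
    have hamsa : star am = am := by
      rw [hamdef, star_smul, star_sub, RCLike.star_def, hconj2, ← map_star, ha'sa]
    set M : ℝ := ‖am‖ with hM
    set N₀ : ℕ := (I₀ ∪ J).sup id + 1 with hN₀
    have hIJ : I₀ ∪ J ⊆ Finset.range N₀ := by
      intro i hi
      exact Finset.mem_range.mpr (Nat.lt_succ_of_le (Finset.le_sup (f := id) hi))
    set K : ℝ := (8 * (‖b'‖ + 1) * (M + 1) / ε) ^ 2 with hK
    refine ⟨max (max N₀ 1) ⌈K⌉₊, fun n hn => ?_⟩
    have hn1 : 1 ≤ n := le_trans (le_trans (le_max_right N₀ 1) (le_max_left _ _)) hn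
    have hnN₀ : N₀ ≤ n := le_trans (le_trans (le_max_left N₀ 1) (le_max_left _ _)) hn
    have hnK : K ≤ (n : ℝ) := by
      calc K ≤ (⌈K⌉₊ : ℝ) := Nat.le_ceil K
        _ ≤ (n : ℝ) := Nat.cast_le.mpr (le_trans (le_max_right _ _) hn)
    have hrange : I₀ ∪ J ⊆ Finset.range n :=
      hIJ.trans (Finset.range_subset_range.mpr hnN₀)
    -- localization facts
    have hloc : ∀ (x : A), x ∈ Q.loc I₀ → ∀ k : ℕ,
        L.act (bswapFinPerm n k) x ∈ Q.loc (I₀.image fun m =>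
          ((bswapFinPerm n k : Equiv.Perm ℕ) m)) := by
      intro x hx k
      have himg := L.act_loc (bswapFinPerm n k) I₀
      have : L.act (bswapFinPerm n k) x ∈
          ((fun a : A => L.act (bswapFinPerm n k) a) '' (Q.loc I₀)) :=
        Set.mem_image_of_mem _ hx
      rw [himg] at this
      exact this
    have hI₀sub : I₀ ⊆ Finset.range n :=
      (Finset.subset_union_left).trans hrange
    have hJsub : J ⊆ Finset.range n :=
      (Finset.subset_union_right).trans hrange
    have hdisjJ : ∀ k : ℕ, Disjoint (I₀.image fun m =>
        ((bswapFinPerm n k : Equiv.Perm ℕ) m)) J := by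
      intro k
      refine Finset.disjoint_left.mpr fun x hx hxJ => ?_
      have h1 := bswapFinPerm_image hI₀sub hx
      have h2 := hJsub hxJ
      rw [Finset.mem_Ico] at h1
      rw [Finset.mem_range] at h2
      have := bswap_d_ge n k
      omega
    have hdisjjk : ∀ j k : ℕ, j ≠ k → Disjoint
        (I₀.image fun m => ((bswapFinPerm n j : Equiv.Perm ℕ) m))
        (I₀.image fun m => ((bswapFinPerm n k : Equiv.Perm ℕ) m)) := by
      intro j k hjk
      refine Finset.disjoint_left.mpr fun x hx hx' => ?_
      have h1 := bswapFinPerm_image hI₀sub hx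
      have h2 := bswapFinPerm_image hI₀sub hx'
      rw [Finset.mem_Ico] at h1 h2
      rcases Nat.lt_or_ge j k with h | h
      · have : n * (j + 1) + n ≤ n * (k + 1) := by nlinarith
        omega
      · have hkj : k < j := by omega
        have : n * (k + 1) + n ≤ n * (j + 1) := by nlinarith
        omega
    -- gradings of translated elements
    have hgradp : ∀ k : ℕ, Q.grading (L.act (bswapFinPerm n k) ap)
        = L.act (bswapFinPerm n k) ap := by
      intro k
      rw [← L.act_grading, hgap]
    have hgradm : ∀ k : ℕ, Q.grading (L.act (bswapFinPerm n k) am)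
        = -(L.act (bswapFinPerm n k) am) := by
      intro k
      rw [← L.act_grading, hgam, map_neg]
    -- even part commutes with b'
    have hevcomm : π b' * Sx n ap = Sx n ap * π b' := by
      have hterm : ∀ k : ℕ, L.act (bswapFinPerm n k) ap * b'
          = b' * L.act (bswapFinPerm n k) ap := by
        intro k
        exact ((Q.loc_commute (hdisjJ k) _ (hloc ap hapmem k) _ hb'J).1
          (Or.inl (hgradp k)))
      show π b' * ((n:ℝ)⁻¹ • ∑ k ∈ Finset.range n, π (L.act (bswapFinPerm n k) ap))
          = ((n:ℝ)⁻¹ • ∑ k ∈ Finset.range n, π (L.act (bswapFinPerm n k) ap)) * π b'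
      rw [mul_smul_comm, smul_mul_assoc, Finset.mul_sum, Finset.sum_mul]
      congr 1
      refine Finset.sum_congr rfl fun k _ => ?_
      rw [← map_mul, ← map_mul, hterm k]
    -- norm bound for the odd part
    have hoddnorm : ‖Sx n am‖ ≤ M / Real.sqrt n := by
      have hsum : ∑ k ∈ Finset.range n, π (L.act (bswapFinPerm n k) am)
          = π (∑ k ∈ Finset.range n, L.act (bswapFinPerm n k) am) := by
        rw [map_sum]
      have hbd : ‖∑ k ∈ Finset.range n, L.act (bswapFinPerm n k) am‖
          ≤ Real.sqrt n * M := by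
        refine aux_norm_sum _ n M (norm_nonneg _) ?_ ?_ ?_
        · intro k _
          exact le_of_eq (hact _ _)
        · intro k _
          rw [← map_star, hamsa]
        · intro j _ k _ hjk
          exact (Q.loc_commute (hdisjjk j k hjk) _ (hloc am hammem j) _
            (hloc am hammem k)).2 (hgradm j) (hgradm k)
      have hsn : (0 : ℝ) < Real.sqrt n := by
        refine Real.sqrt_pos.mpr ?_
        exact_mod_cast Nat.pos_of_ne_zero (by omega)
      calc ‖Sx n am‖ = ‖(n : ℝ)⁻¹‖ * ‖∑ k ∈ Finset.range n, π (L.act (bswapFinPerm n k) am)‖ := by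
            rw [hSxdef]; exact norm_smul _ _
        _ ≤ (n : ℝ)⁻¹ * (Real.sqrt n * M) := by
            rw [Real.norm_eq_abs, abs_of_nonneg (by positivity)]
            refine mul_le_mul_of_nonneg_left ?_ (by positivity)
            rw [hsum]
            exact (hπ _).trans hbd
        _ = M / Real.sqrt n := by
            rw [eq_div_iff (ne_of_gt hsn)]
            calc (n : ℝ)⁻¹ * (Real.sqrt n * M) * Real.sqrt n
                = (n : ℝ)⁻¹ * (Real.sqrt n * Real.sqrt n) * M := by ring
              _ = (n : ℝ)⁻¹ * (n : ℝ) * M := by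
                  rw [Real.mul_self_sqrt (Nat.cast_nonneg n)]
              _ = M := by
                  rw [inv_mul_cancel₀ (by exact_mod_cast (by omega : 0 < n).ne' : (n:ℝ) ≠ 0), one_mul]
    -- decomposition of the commutator
    have hdecomp : π b * S n - S n * π b
        = (π (b - b') * S n - S n * π (b - b'))
          + (π b' * Sx n (a - a') - Sx n (a - a') * π b')
          + (π b' * Sx n ap - Sx n ap * π b')
          + (π b' * Sx n am - Sx n am * π b') := by
      have h1 : π b = π (b - b') + π b' := by
        rw [← map_add]
        congr 1
        abel
      have h2 : S n = Sx n (a - a') + Sx n ap + Sx n am := by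
        show Sx n a = _
        have h3 : a = (a - a') + (ap + am) := by rw [hsplit]; abel
        calc Sx n a = Sx n ((a - a') + (ap + am)) := by rw [← h3]
          _ = _ := by rw [hSxadd, hSxadd, add_assoc]
      rw [h1, h2]
      noncomm_ring
    have hb1 : ‖π (b - b') * S n - S n * π (b - b')‖ ≤ 2 * (ε / (8 * (‖a‖ + 1))) * ‖a‖ := by
      have h1 : ‖π (b - b')‖ ≤ ε / (8 * (‖a‖ + 1)) := le_of_lt (lt_of_le_of_lt (hπ _) hbb')
      have h2 : ‖S n‖ ≤ ‖a‖ := hSxnorm n a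
      calc ‖π (b - b') * S n - S n * π (b - b')‖
          ≤ ‖π (b - b') * S n‖ + ‖S n * π (b - b')‖ := norm_sub_le _ _
        _ ≤ ‖π (b - b')‖ * ‖S n‖ + ‖S n‖ * ‖π (b - b')‖ :=
            add_le_add (norm_mul_le _ _) (norm_mul_le _ _)
        _ ≤ (ε / (8 * (‖a‖ + 1))) * ‖a‖ + ‖a‖ * (ε / (8 * (‖a‖ + 1))) := by
            have hε8 : (0:ℝ) ≤ ε / (8 * (‖a‖ + 1)) := by positivity
            refine add_le_add ?_ ?_
            · exact mul_le_mul h1 h2 (norm_nonneg _) hε8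
            · exact mul_le_mul h2 h1 (norm_nonneg _) (norm_nonneg _)
        _ = 2 * (ε / (8 * (‖a‖ + 1))) * ‖a‖ := by ring
    have hb2 : ‖π b' * Sx n (a - a') - Sx n (a - a') * π b'‖
        ≤ 2 * ‖b'‖ * (ε / (8 * (‖b'‖ + 1))) := by
      have h1 : ‖π b'‖ ≤ ‖b'‖ := hπ _
      have h2 : ‖Sx n (a - a')‖ ≤ ε / (8 * (‖b'‖ + 1)) :=
        le_of_lt (lt_of_le_of_lt (hSxnorm n (a - a')) haa')
      calc ‖π b' * Sx n (a - a') - Sx n (a - a') * π b'‖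
          ≤ ‖π b' * Sx n (a - a')‖ + ‖Sx n (a - a') * π b'‖ := norm_sub_le _ _
        _ ≤ ‖π b'‖ * ‖Sx n (a - a')‖ + ‖Sx n (a - a')‖ * ‖π b'‖ :=
            add_le_add (norm_mul_le _ _) (norm_mul_le _ _)
        _ ≤ ‖b'‖ * (ε / (8 * (‖b'‖ + 1))) + (ε / (8 * (‖b'‖ + 1))) * ‖b'‖ := by
            have hε8 : (0:ℝ) ≤ ε / (8 * (‖b'‖ + 1)) := by positivity
            refine add_le_add ?_ ?_
            · exact mul_le_mul h1 h2 (norm_nonneg _) (norm_nonneg _)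
            · exact mul_le_mul h2 h1 (norm_nonneg _) hε8
        _ = 2 * ‖b'‖ * (ε / (8 * (‖b'‖ + 1))) := by ring
    have hb4 : ‖π b' * Sx n am - Sx n am * π b'‖ ≤ 2 * ‖b'‖ * (M / Real.sqrt n) := by
      have h1 : ‖π b'‖ ≤ ‖b'‖ := hπ _
      calc ‖π b' * Sx n am - Sx n am * π b'‖
          ≤ ‖π b' * Sx n am‖ + ‖Sx n am * π b'‖ := norm_sub_le _ _
        _ ≤ ‖π b'‖ * ‖Sx n am‖ + ‖Sx n am‖ * ‖π b'‖ :=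
            add_le_add (norm_mul_le _ _) (norm_mul_le _ _)
        _ ≤ ‖b'‖ * (M / Real.sqrt n) + (M / Real.sqrt n) * ‖b'‖ := by
            have hd : (0:ℝ) ≤ M / Real.sqrt n := by positivity
            refine add_le_add ?_ ?_
            · exact mul_le_mul h1 hoddnorm (norm_nonneg _) (norm_nonneg _)
            · exact mul_le_mul hoddnorm h1 (norm_nonneg _) hd
        _ = 2 * ‖b'‖ * (M / Real.sqrt n) := by ring
    -- final numerical estimate
    have hsqrtK : Real.sqrt K = 8 * (‖b'‖ + 1) * (M + 1) / ε := by
      rw [hK, Real.sqrt_sq (by positivity)]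
    have hsn : Real.sqrt K ≤ Real.sqrt n := Real.sqrt_le_sqrt hnK
    have hsn1 : (1:ℝ) ≤ Real.sqrt n := by
      rw [show (1:ℝ) = Real.sqrt 1 by simp]
      exact Real.sqrt_le_sqrt (by exact_mod_cast hn1)
    have hM0 : 0 ≤ M := by rw [hM]; exact norm_nonneg am
    have hodd_small : 2 * ‖b'‖ * (M / Real.sqrt n) ≤ ε / 4 := by
      have hsnpos : (0:ℝ) < Real.sqrt n := lt_of_lt_of_le one_pos hsn1
      have key : 8 * ‖b'‖ * M ≤ ε * Real.sqrt n := by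
        have k1 : 8 * ‖b'‖ * M ≤ 8 * (‖b'‖ + 1) * (M + 1) := by
          nlinarith [norm_nonneg b']
        have k2 : 8 * (‖b'‖ + 1) * (M + 1) = ε * Real.sqrt K := by
          rw [hsqrtK]
          field_simp
        have k3 : ε * Real.sqrt K ≤ ε * Real.sqrt n :=
          mul_le_mul_of_nonneg_left hsn (le_of_lt hε)
        linarith
      have h4 : (0:ℝ) < 4 * Real.sqrt n := by positivity
      rw [← mul_le_mul_iff_of_pos_right h4]
      calc 2 * ‖b'‖ * (M / Real.sqrt n) * (4 * Real.sqrt n) = 8 * ‖b'‖ * M := by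
            field_simp
            ring
        _ ≤ ε * Real.sqrt n := key
        _ = ε / 4 * (4 * Real.sqrt n) := by ring
    have hb1' : 2 * (ε / (8 * (‖a‖ + 1))) * ‖a‖ ≤ ε / 4 := aux_eps_bound hε (norm_nonneg a)
    have hb2' : 2 * ‖b'‖ * (ε / (8 * (‖b'‖ + 1))) ≤ ε / 4 := by
      rw [show 2 * ‖b'‖ * (ε / (8 * (‖b'‖ + 1))) = 2 * (ε / (8 * (‖b'‖ + 1))) * ‖b'‖ by ring]
      exact aux_eps_bound hε (norm_nonneg b')
    calc ‖π b * S n - S n * π b‖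
        ≤ ‖π (b - b') * S n - S n * π (b - b')‖
          + ‖π b' * Sx n (a - a') - Sx n (a - a') * π b'‖
          + ‖π b' * Sx n ap - Sx n ap * π b'‖
          + ‖π b' * Sx n am - Sx n am * π b'‖ := by
          rw [hdecomp]
          exact le_trans (norm_add_le _ _) (add_le_add (le_trans (norm_add_le _ _)
            (add_le_add (norm_add_le _ _) (le_refl _))) (le_refl _))
      _ ≤ ε / 4 + ε / 4 + 0 + ε / 4 := by
          refine add_le_add (add_le_add (add_le_add ?_ ?_) ?_) ?_
          · exact le_trans hb1 hb1'
          · exact le_trans hb2 hb2'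
          · rw [hevcomm, sub_self, norm_zero]
          · exact le_trans hb4 hodd_small
      _ < ε := by linarith
  -- bound on S
  have hSbound : ∀ n : ℕ, ‖S n‖ ≤ ‖a‖ := fun n => hSxnorm n a
  have hIbound : ∀ (u v : H) (n : ℕ), ‖(⟪u, S n v⟫_ℂ)‖ ≤ ‖u‖ * ‖a‖ * ‖v‖ := by
    intro u v n
    calc ‖(⟪u, S n v⟫_ℂ)‖ ≤ ‖u‖ * ‖S n v‖ := norm_inner_le_norm u _
      _ ≤ ‖u‖ * (‖S n‖ * ‖v‖) :=
          mul_le_mul_of_nonneg_left ((S n).le_opNorm v) (norm_nonneg u)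
      _ ≤ ‖u‖ * (‖a‖ * ‖v‖) :=
          mul_le_mul_of_nonneg_left
            (mul_le_mul_of_nonneg_right (hSbound n) (norm_nonneg v)) (norm_nonneg u)
      _ = ‖u‖ * ‖a‖ * ‖v‖ := by ring
  -- ultrafilter limit of matrix coefficients
  set U : Ultrafilter ℕ := Ultrafilter.of Filter.atTop with hUdef
  have hUle : (U : Filter ℕ) ≤ Filter.atTop := Ultrafilter.of_le _
  have hconv : ∀ u v : H, ∃ c : ℂ,
      Filter.Tendsto (fun n => (⟪u, S n v⟫_ℂ)) (U : Filter ℕ) (𝓝 c) := by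
    intro u v
    have hball : ∀ n : ℕ, (⟪u, S n v⟫_ℂ) ∈ Metric.closedBall (0:ℂ) (‖u‖ * ‖a‖ * ‖v‖) := by
      intro n
      rw [Metric.mem_closedBall, dist_zero_right]
      exact hIbound u v n
    have hle : (Ultrafilter.map (fun n => (⟪u, S n v⟫_ℂ)) U : Filter ℂ)
        ≤ Filter.principal (Metric.closedBall (0:ℂ) (‖u‖ * ‖a‖ * ‖v‖)) := by
      rw [Filter.le_principal_iff]
      exact Filter.mem_map.mpr (Filter.univ_mem' hball)
    obtain ⟨c, _, hc⟩ := (isCompact_closedBall (0:ℂ) _).ultrafilter_le_nhds _ hle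
    refine ⟨c, ?_⟩
    rwa [Ultrafilter.coe_map] at hc
  set φ : H → H → ℂ := fun u v => Filter.limUnder (U : Filter ℕ) (fun n => (⟪u, S n v⟫_ℂ)) with hφdef
  have hφ : ∀ u v : H,
      Filter.Tendsto (fun n => (⟪u, S n v⟫_ℂ)) (U : Filter ℕ) (𝓝 (φ u v)) := by
    intro u v
    obtain ⟨c, hc⟩ := hconv u v
    have hceq : φ u v = c := hc.limUnder_eq
    rw [hceq]; exact hc
  have hφbound : ∀ u v : H, ‖φ u v‖ ≤ ‖u‖ * ‖a‖ * ‖v‖ := by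
    intro u v
    exact le_of_tendsto (hφ u v).norm (Filter.Eventually.of_forall fun n => hIbound u v n)
  have hφaddleft : ∀ (u u' v : H), φ (u + u') v = φ u v + φ u' v := by
    intro u u' v
    refine tendsto_nhds_unique (hφ (u + u') v) ?_
    have := (hφ u v).add (hφ u' v)
    refine this.congr fun n => ?_
    rw [← inner_add_left]
  have hφsmulleft : ∀ (c : ℂ) (u v : H), φ (c • u) v = (starRingEnd ℂ) c * φ u v := by
    intro c u v
    refine tendsto_nhds_unique (hφ (c • u) v) ?_
    have := (hφ u v).const_mul ((starRingEnd ℂ) c)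
    refine this.congr fun n => ?_
    rw [← inner_smul_left]
  have hφaddright : ∀ (u v v' : H), φ u (v + v') = φ u v + φ u v' := by
    intro u v v'
    refine tendsto_nhds_unique (hφ u (v + v')) ?_
    have := (hφ u v).add (hφ u v')
    refine this.congr fun n => ?_
    rw [← inner_add_right, ← map_add]
  have hφsmulright : ∀ (c : ℂ) (u v : H), φ u (c • v) = c * φ u v := by
    intro c u v
    refine tendsto_nhds_unique (hφ u (c • v)) ?_
    have := (hφ u v).const_mul c
    refine this.congr fun n => ?_
    rw [← inner_smul_right, ← ContinuousLinearMap.map_smul]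
  -- construct the operator T from the sesquilinear form φ
  have hTfun : ∀ v : H, ∃ w : H, ∀ u : H, (⟪u, w⟫_ℂ) = φ u v := by
    intro v
    set ℓ : H →ₗ[ℂ] ℂ :=
      { toFun := fun u => (starRingEnd ℂ) (φ u v)
        map_add' := by
          intro u u'
          simp only [hφaddleft, map_add]
        map_smul' := by
          intro c u
          simp only [hφsmulleft, map_mul, Complex.conj_conj, RingHom.id_apply,
            smul_eq_mul] } with hℓdef
    have hℓb : ∀ u : H, ‖ℓ u‖ ≤ (‖a‖ * ‖v‖) * ‖u‖ := by
      intro u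
      show ‖(starRingEnd ℂ) (φ u v)‖ ≤ _
      rw [RCLike.norm_conj]
      calc ‖φ u v‖ ≤ ‖u‖ * ‖a‖ * ‖v‖ := hφbound u v
        _ = (‖a‖ * ‖v‖) * ‖u‖ := by ring
    set ℓc : H →L[ℂ] ℂ := LinearMap.mkContinuous ℓ (‖a‖ * ‖v‖) hℓb with hℓcdef
    refine ⟨(InnerProductSpace.toDual ℂ H).symm ℓc, fun u => ?_⟩
    have h1 : (⟪(InnerProductSpace.toDual ℂ H).symm ℓc, u⟫_ℂ) = ℓc u :=
      InnerProductSpace.toDual_symm_apply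
    calc (⟪u, (InnerProductSpace.toDual ℂ H).symm ℓc⟫_ℂ)
        = (starRingEnd ℂ) (⟪(InnerProductSpace.toDual ℂ H).symm ℓc, u⟫_ℂ) :=
          (inner_conj_symm _ _).symm
      _ = (starRingEnd ℂ) (ℓc u) := by rw [h1]
      _ = (starRingEnd ℂ) ((starRingEnd ℂ) (φ u v)) := rfl
      _ = φ u v := Complex.conj_conj _
  choose Tf hTf using hTfun
  have hTfb : ∀ v : H, ‖Tf v‖ ≤ ‖a‖ * ‖v‖ := by
    intro v
    rcases eq_or_lt_of_le (norm_nonneg (Tf v)) with h | h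
    · rw [← h]; positivity
    · have h5 : ‖Tf v‖ * ‖Tf v‖ ≤ ‖Tf v‖ * (‖a‖ * ‖v‖) := by
        calc ‖Tf v‖ * ‖Tf v‖ = RCLike.re (⟪Tf v, Tf v⟫_ℂ) :=
              (inner_self_eq_norm_mul_norm _).symm
          _ ≤ ‖(⟪Tf v, Tf v⟫_ℂ)‖ := RCLike.re_le_norm _
          _ = ‖φ (Tf v) v‖ := by rw [hTf v (Tf v)]
          _ ≤ ‖Tf v‖ * ‖a‖ * ‖v‖ := hφbound _ _
          _ = ‖Tf v‖ * (‖a‖ * ‖v‖) := by ring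
      exact le_of_mul_le_mul_left h5 h
  have hTfadd : ∀ v v' : H, Tf (v + v') = Tf v + Tf v' := by
    intro v v'
    refine ext_inner_left ℂ fun u => ?_
    rw [hTf, inner_add_right, hTf, hTf, hφaddright]
  have hTfsmul : ∀ (c : ℂ) (v : H), Tf (c • v) = c • Tf v := by
    intro c v
    refine ext_inner_left ℂ fun u => ?_
    rw [hTf, inner_smul_right, hTf, hφsmulright]
  set T : H →L[ℂ] H := LinearMap.mkContinuous
    { toFun := Tf
      map_add' := hTfadd
      map_smul' := by
        intro c v
        rw [RingHom.id_apply]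
        exact hTfsmul c v }
    ‖a‖ (fun v => hTfb v) with hTdef
  have hT : ∀ u v : H, (⟪u, T v⟫_ℂ) = φ u v := fun u v => hTf v u
  refine ⟨T, ?_, ?_⟩
  · -- membership in the WOT closure of the convex hull
    intro ε hε m y z
    have hev : ∀ i : Fin m, ∀ᶠ n in (U : Filter ℕ), ‖(⟪y i, (T - S n) (z i)⟫_ℂ)‖ < ε := by
      intro i
      have h1 : Filter.Tendsto (fun n => φ (y i) (z i) - (⟪y i, S n (z i)⟫_ℂ))
          (U : Filter ℕ) (𝓝 0) := by
        have h0 := Filter.Tendsto.sub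
          (tendsto_const_nhds (x := φ (y i) (z i)) (f := (U : Filter ℕ))) (hφ (y i) (z i))
        simpa using h0
      have h2 := Metric.tendsto_nhds.mp h1 ε hε
      refine h2.mono fun n hn => ?_
      rw [dist_zero_right] at hn
      have heq : (⟪y i, (T - S n) (z i)⟫_ℂ) = φ (y i) (z i) - (⟪y i, S n (z i)⟫_ℂ) := by
        rw [ContinuousLinearMap.sub_apply, inner_sub_right, hT]
      rwa [heq]
    have hev1 : ∀ᶠ n in (U : Filter ℕ), 1 ≤ n :=
      Filter.Eventually.filter_mono hUle (Filter.eventually_ge_atTop 1)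
    have hall := hev1.and (Filter.eventually_all.mpr hev)
    obtain ⟨n, hn1, hni⟩ := hall.exists
    exact ⟨S n, hSmem n hn1, hni⟩
  · -- membership in the commutant
    rw [Set.mem_centralizer_iff]
    rintro g ⟨b, rfl⟩
    have hinner : ∀ u w : H, (⟪u, π b w⟫_ℂ) = (⟪π (star b) u, w⟫_ℂ) := by
      intro u w
      rw [map_star, ContinuousLinearMap.star_eq_adjoint,
        ContinuousLinearMap.adjoint_inner_left]
    have hD : Filter.Tendsto (fun n => ‖π b * S n - S n * π b‖) Filter.atTop (𝓝 0) := by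
      rw [Metric.tendsto_atTop]
      intro ε hε
      obtain ⟨N, hN⟩ := hcomm b ε hε
      refine ⟨N, fun n hn => ?_⟩
      rw [Real.dist_eq, sub_zero, abs_of_nonneg (norm_nonneg _)]
      exact hN n hn
    have key : ∀ u v : H, (⟪u, (π b * T) v⟫_ℂ) = (⟪u, (T * π b) v⟫_ℂ) := by
      intro u v
      have h1 : Filter.Tendsto (fun n => (⟪u, (π b * S n) v⟫_ℂ)) (U : Filter ℕ)
          (𝓝 (⟪u, (π b * T) v⟫_ℂ)) := by
        have heqT : (⟪u, (π b * T) v⟫_ℂ) = φ (π (star b) u) v := by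
          rw [ContinuousLinearMap.mul_apply, hinner, hT]
        rw [heqT]
        refine (hφ (π (star b) u) v).congr fun n => ?_
        rw [← hinner, ← ContinuousLinearMap.mul_apply]
      have h2 : Filter.Tendsto (fun n => (⟪u, (S n * π b) v⟫_ℂ)) (U : Filter ℕ)
          (𝓝 (⟪u, (T * π b) v⟫_ℂ)) := by
        have heqT : (⟪u, (T * π b) v⟫_ℂ) = φ u (π b v) := by
          rw [ContinuousLinearMap.mul_apply, hT]
        rw [heqT]
        refine (hφ u (π b v)).congr fun n => ?_
        rw [← ContinuousLinearMap.mul_apply]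
      have h3 := h1.sub h2
      have hb5 : ∀ n : ℕ, ‖(⟪u, (π b * S n - S n * π b) v⟫_ℂ)‖
          ≤ ‖u‖ * ‖v‖ * ‖π b * S n - S n * π b‖ := by
        intro n
        calc ‖(⟪u, (π b * S n - S n * π b) v⟫_ℂ)‖
            ≤ ‖u‖ * ‖(π b * S n - S n * π b) v‖ := norm_inner_le_norm _ _
          _ ≤ ‖u‖ * (‖π b * S n - S n * π b‖ * ‖v‖) :=
              mul_le_mul_of_nonneg_left ((π b * S n - S n * π b).le_opNorm v) (norm_nonneg u)
          _ = ‖u‖ * ‖v‖ * ‖π b * S n - S n * π b‖ := by ring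
      have h5 : Filter.Tendsto (fun n => (⟪u, (π b * S n - S n * π b) v⟫_ℂ))
          Filter.atTop (𝓝 0) :=
        squeeze_zero_norm hb5 (by simpa using hD.const_mul (‖u‖ * ‖v‖))
      have h4 : Filter.Tendsto (fun n => (⟪u, (π b * S n) v⟫_ℂ) - (⟪u, (S n * π b) v⟫_ℂ))
          (U : Filter ℕ) (𝓝 0) := by
        refine ((h5.mono_left hUle).congr fun n => ?_)
        rw [ContinuousLinearMap.sub_apply, inner_sub_right]
      have h7 := tendsto_nhds_unique h3 h4
      exact sub_eq_zero.mp h7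
    refine ContinuousLinearMap.ext fun v => ?_
    exact ext_inner_left ℂ fun u => key u v

end
end

section
/- Let (A_i, θ_i), i = 1, ..., n, be Z2-graded C*-algebras and let ω_i be a state on A_i for each i. The product functional ω₁ × ω₂ × ··· × ω_n on the algebraic Fermi tensor product A₁ ⊗̂ A₂ ⊗̂ ··· ⊗̂ A_n, defined on simple tensors by (ω₁ × ··· × ω_n)(a₁ ⊗̂ ··· ⊗̂ a_n) = ω₁(a₁)···ω_n(a_n), is positive if and only if at least n − 1 of the states ω₁, ..., ω_n are even. Moreover, ω₁ × ··· × ω_n is even if and only if all the states ω₁, ..., ω_n are even. -/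
noncomputable section

open scoped ComplexOrder

/-- count for the star sign -/
def C2 {n : ℕ} (s : Fin n → Bool) : ℕ :=
  (Finset.univ.filter (fun p : Fin n × Fin n => p.1 < p.2 ∧ s p.1 = true ∧ s p.2 = true)).card

/-- count for the multiplication sign -/
def Mst {n : ℕ} (s t : Fin n → Bool) : ℕ :=
  (Finset.univ.filter (fun p : Fin n × Fin n => p.2 < p.1 ∧ s p.1 = true ∧ t p.2 = true)).card

/-- count for the correcting diagonal sign -/
def dd {n : ℕ} (i0 : Fin n) (s : Fin n → Bool) : ℕ :=
  (Finset.univ.filter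
    (fun p : Fin n × Fin n => p.1 = i0 ∧ i0 < p.2 ∧ s i0 = true ∧ s p.2 = true)).card

lemma neg_one_pow_congr' {a b : ℕ} (h : Even (a + b)) : ((-1:ℂ))^a = (-1)^b := by
  rcases Nat.even_or_odd a with ha | ha
  · rw [ha.neg_one_pow, (Nat.even_add.mp h |>.mp ha).neg_one_pow]
  · have hb : Odd b := by
      rcases Nat.even_or_odd b with hb | hb
      · exact absurd (Nat.even_add.mp h |>.mpr hb) (Nat.not_even_iff_odd.mpr ha)
      · exact hb
    rw [ha.neg_one_pow, hb.neg_one_pow]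

lemma c2_eq_mss {n : ℕ} (s : Fin n → Bool) : C2 s = Mst s s := by
  apply Finset.card_bij (fun p _ => Prod.swap p)
  · rintro ⟨p, q⟩ hp
    simp only [Finset.mem_filter, Finset.mem_univ, true_and] at hp ⊢
    exact ⟨hp.1, hp.2.2, hp.2.1⟩
  · rintro ⟨p, q⟩ _ ⟨p', q'⟩ _ h
    simpa [Prod.ext_iff, and_comm] using h
  · rintro ⟨p, q⟩ hp
    simp only [Finset.mem_filter, Finset.mem_univ, true_and] at hp
    exact ⟨(q, p), by simp only [Finset.mem_filter, Finset.mem_univ, true_and]; tauto, rfl⟩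

lemma parity_key {n : ℕ} (i0 : Fin n) (s t : Fin n → Bool) (hst : ∀ j, j ≠ i0 → s j = t j) :
    Even (C2 s + Mst s t + (dd i0 s + dd i0 t)) := by
  rw [even_iff_two_dvd, ← ZMod.natCast_eq_zero_iff]
  push_cast
  rw [C2, Mst, dd, dd, Finset.card_filter, Finset.card_filter, Finset.card_filter,
    Finset.card_filter]
  push_cast
  have hswap : (∑ x : Fin n × Fin n,
        (if x.2 < x.1 ∧ s x.1 = true ∧ t x.2 = true then (1 : ZMod 2) else 0))
      = ∑ x : Fin n × Fin n, (if x.1 < x.2 ∧ s x.2 = true ∧ t x.1 = true then (1:ZMod 2) else 0) :=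
    Fintype.sum_equiv (Equiv.prodComm _ _) _ _ (fun x => rfl)
  rw [hswap, ← Finset.sum_add_distrib, ← Finset.sum_add_distrib, ← Finset.sum_add_distrib]
  apply Finset.sum_eq_zero
  rintro ⟨p, q⟩ -
  dsimp only
  by_cases hpq : p < q
  · by_cases hp : p = i0
    · subst hp
      have hq : q ≠ p := (ne_of_gt hpq)
      rw [← hst q hq]
      cases hs0 : s p <;> cases hsq : s q <;> cases ht0 : t p <;>
        simp [hpq, hs0, hsq, ht0] <;> decide
    · have hps : s p = t p := hst p hp
      by_cases hq : q = i0
      · subst hq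
        rw [← hps]
        simp only [hp, false_and, if_false, hpq, true_and, add_zero]
        cases hs0 : s p <;> cases hsq : s q <;> simp [hs0, hsq] <;> decide
      · rw [← hps, ← hst q hq]
        simp only [hp, false_and, if_false, hpq, true_and, add_zero]
        cases hs0 : s p <;> cases hsq : s q <;> simp [hs0, hsq] <;> decide
  · have h3 : ¬(p = i0 ∧ i0 < q ∧ s i0 = true ∧ s q = true) := by
      rintro ⟨rfl, h, -⟩; exact hpq h
    have h4 : ¬(p = i0 ∧ i0 < q ∧ t i0 = true ∧ t q = true) := by
      rintro ⟨rfl, h, -⟩; exact hpq h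
    simp [hpq, h3, h4]

lemma herm_aux {A : Type*} [Ring A] [StarRing A] [Algebra ℂ A] [StarModule ℂ A]
    (φ : A →ₗ[ℂ] ℂ) (hpos : ∀ a, 0 ≤ φ (star a * a)) (x y : A) :
    φ (star y * x) = starRingEnd ℂ (φ (star x * y)) := by
  have him : ∀ a : A, (φ (star a * a)).im = 0 := fun a => ((Complex.le_def.mp (hpos a)).2).symm
  have e1 : φ (star (x + y) * (x + y))
      = φ (star x * x) + φ (star x * y) + φ (star y * x) + φ (star y * y) := by
    rw [star_add, add_mul, mul_add, mul_add, map_add, map_add, map_add]; ring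
  have e2 : φ (star (x + Complex.I • y) * (x + Complex.I • y))
      = φ (star x * x) + Complex.I * φ (star x * y) + (-Complex.I) * φ (star y * x)
        + φ (star y * y) := by
    have hsI : star (Complex.I • y) = (-Complex.I) • star y := by
      rw [star_smul, Complex.star_def, Complex.conj_I]
    simp only [star_add, hsI, add_mul, mul_add, smul_add, smul_mul_assoc, mul_smul_comm,
      smul_smul]
    have : Complex.I * -Complex.I = 1 := by
      rw [mul_neg, Complex.I_mul_I, neg_neg]
    rw [this, one_smul, map_add, map_add, map_add, map_smul, map_smul, smul_eq_mul, smul_eq_mul]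
    ring
  have h1 := him (x + y)
  have h2 := him (x + Complex.I • y)
  rw [e1] at h1
  rw [e2] at h2
  simp only [Complex.add_im, Complex.mul_im, Complex.I_re, Complex.I_im, Complex.neg_re,
    Complex.neg_im, him x, him y] at h1 h2
  apply Complex.ext
  · simp only [Complex.conj_re]; nlinarith [h2]
  · simp only [Complex.conj_im]; nlinarith [h1]

lemma gram_psd {A : Type*} [Ring A] [StarRing A] [Algebra ℂ A] [StarModule ℂ A]
    (φ : A →ₗ[ℂ] ℂ) (hpos : ∀ a, 0 ≤ φ (star a * a)) {m : ℕ} (v : Fin m → A) :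
    Matrix.PosSemidef (Matrix.of fun k l => φ (star (v k) * v l)) := by
  refine Matrix.PosSemidef.of_dotProduct_mulVec_nonneg ?_ ?_
  · ext k l
    simp only [Matrix.conjTranspose_apply, Matrix.of_apply]
    rw [herm_aux φ hpos]
    simp
  · intro x
    have key : φ (star (∑ k, x k • v k) * (∑ l, x l • v l))
        = dotProduct (star x) (Matrix.mulVec (Matrix.of fun k l => φ (star (v k) * v l)) x) := by
      rw [star_sum]
      simp only [star_smul]
      rw [Finset.sum_mul_sum, map_sum]
      simp only [dotProduct, Matrix.mulVec, Pi.star_apply, Matrix.of_apply,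
        Finset.mul_sum, map_sum]
      refine Finset.sum_congr rfl (fun k _ => Finset.sum_congr rfl (fun l _ => ?_))
      simp only [smul_mul_assoc, mul_smul_comm, smul_smul, LinearMap.map_smul, smul_eq_mul]
      ring
    rw [← key]
    exact hpos _

lemma prod_gram_pos {n : ℕ} (A : Fin n → Type*)
    [∀ i, Ring (A i)] [∀ i, StarRing (A i)] [∀ i, Algebra ℂ (A i)] [∀ i, StarModule ℂ (A i)]
    (ω : ∀ i, A i →ₗ[ℂ] ℂ) (hω : ∀ i, ∀ a, 0 ≤ ω i (star a * a))
    (S : Finset (Fin n)) {m : ℕ} (c : Fin m → ℂ) (a : Fin m → ∀ i, A i) :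
    0 ≤ ∑ k, ∑ l, starRingEnd ℂ (c k) * c l * ∏ i ∈ S, ω i (star (a k i) * a l i) := by
  induction S using Finset.induction_on generalizing c with
  | empty =>
    have h : ∑ k, ∑ l, starRingEnd ℂ (c k) * c l
          * ∏ i ∈ (∅ : Finset (Fin n)), ω i (star (a k i) * a l i)
        = star (∑ k, c k) * (∑ k, c k) := by
      rw [star_sum, Finset.sum_mul_sum]
      simp only [Finset.prod_empty, mul_one, Pi.star_apply]
      rfl
    rw [h]
    exact star_mul_self_nonneg _
  | @insert j S hj ih =>
    obtain ⟨Bm, hBm⟩ : ∃ Bm : Matrix (Fin m) (Fin m) ℂ,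
        (Matrix.of fun k l => ω j (star (a k j) * a l j)) = Bm.conjTranspose * Bm := by
      open scoped MatrixOrder in
      exact CStarAlgebra.nonneg_iff_eq_star_mul_self.mp
        (gram_psd (ω j) (hω j) (fun k => a k j)).nonneg
    have hentry : ∀ k l, ω j (star (a k j) * a l j) = ∑ q, starRingEnd ℂ (Bm q k) * Bm q l := by
      intro k l
      have h1 : (Matrix.of fun k l => ω j (star (a k j) * a l j)) k l
          = (Bm.conjTranspose * Bm) k l := by
        rw [← hBm]
      simpa [Matrix.mul_apply, Matrix.conjTranspose_apply] using h1
    have key : ∑ k, ∑ l, starRingEnd ℂ (c k) * c l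
          * ∏ i ∈ insert j S, ω i (star (a k i) * a l i)
        = ∑ q, ∑ k, ∑ l, starRingEnd ℂ (Bm q k * c k) * (Bm q l * c l)
          * ∏ i ∈ S, ω i (star (a k i) * a l i) := by
      have e1 : ∑ k, ∑ l, starRingEnd ℂ (c k) * c l
            * ∏ i ∈ insert j S, ω i (star (a k i) * a l i)
          = ∑ k, ∑ l, ∑ q, starRingEnd ℂ (Bm q k * c k) * (Bm q l * c l)
            * ∏ i ∈ S, ω i (star (a k i) * a l i) := by
        refine Finset.sum_congr rfl (fun k _ => Finset.sum_congr rfl (fun l _ => ?_))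
        rw [Finset.prod_insert hj, hentry k l, Finset.sum_mul, Finset.mul_sum]
        refine Finset.sum_congr rfl (fun q _ => ?_)
        simp only [_root_.map_mul]
        ring
      rw [e1]
      rw [show (∑ k : Fin m, ∑ l : Fin m, ∑ q : Fin m, starRingEnd ℂ (Bm q k * c k)
            * (Bm q l * c l) * ∏ i ∈ S, ω i (star (a k i) * a l i))
          = ∑ k : Fin m, ∑ q : Fin m, ∑ l : Fin m, starRingEnd ℂ (Bm q k * c k)
            * (Bm q l * c l) * ∏ i ∈ S, ω i (star (a k i) * a l i)
          from Finset.sum_congr rfl (fun k _ => Finset.sum_comm)]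
      exact Finset.sum_comm
    rw [key]
    exact Finset.sum_nonneg (fun q _ => ih (fun k => Bm q k * c k))

/-- Proposition 3.1.  Let `(A i, θ i)`, `i = 1, …, n`, be `ℤ₂`-graded
C*-algebras, and let `B` (with grading `θB` and "simple tensor" map `ι`) be a realization of
the algebraic Fermi (graded) tensor product `A 1 ⊗̂ ⋯ ⊗̂ A n`:  `ι` is multilinear with image
spanning `B`, sends the constant family `1` to `1`, satisfies the graded multiplication and
involution rules (with the Koszul signs determined by the parities of homogeneous entries) and
intertwines the gradings.  For states `ω i` on `A i`, the product functional
`Φ(a₁ ⊗̂ ⋯ ⊗̂ aₙ) = ω₁(a₁) ⋯ ωₙ(aₙ)` is positive if and only if at least `n - 1` of the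
states are even; moreover `Φ` is even if and only if all the `ω i` are even. -/
theorem statement9 {n : ℕ} (A : Fin n → Type*)
    [∀ i, NormedRing (A i)] [∀ i, StarRing (A i)] [∀ i, CStarRing (A i)]
    [∀ i, NormedAlgebra ℂ (A i)] [∀ i, StarModule ℂ (A i)] [∀ i, CompleteSpace (A i)]
    (θ : ∀ i, A i ≃⋆ₐ[ℂ] A i) (hθ : ∀ i a, θ i (θ i a) = a)
    (B : Type*) [Ring B] [StarRing B] [Algebra ℂ B] [StarModule ℂ B]
    (θB : B ≃⋆ₐ[ℂ] B) (hθB : ∀ x, θB (θB x) = x)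
    (ι : (∀ i, A i) → B)
    (hone : ι (fun _ => 1) = 1)
    (hmultilin : ∀ (a : ∀ i, A i) (i : Fin n) (x y : A i) (c : ℂ),
      ι (Function.update a i (c • x + y)) =
        c • ι (Function.update a i x) + ι (Function.update a i y))
    (hspan : Submodule.span ℂ (Set.range ι) = ⊤)
    (hmul : ∀ (a b : ∀ i, A i) (s t : Fin n → Bool),
      (∀ i, θ i (a i) = cond (s i) (-(a i)) (a i)) →
      (∀ i, θ i (b i) = cond (t i) (-(b i)) (b i)) →
      ι a * ι b = ((-1 : ℂ) ^ (Finset.univ.filter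
          (fun p : Fin n × Fin n => p.2 < p.1 ∧ s p.1 = true ∧ t p.2 = true)).card) •
        ι (fun i => a i * b i))
    (hstar : ∀ (a : ∀ i, A i) (s : Fin n → Bool),
      (∀ i, θ i (a i) = cond (s i) (-(a i)) (a i)) →
      star (ι a) = ((-1 : ℂ) ^ (Finset.univ.filter
          (fun p : Fin n × Fin n => p.1 < p.2 ∧ s p.1 = true ∧ s p.2 = true)).card) •
        ι (fun i => star (a i)))
    (hgrading : ∀ a : ∀ i, A i, θB (ι a) = ι (fun i => θ i (a i)))
    (ω : ∀ i, A i →ₗ[ℂ] ℂ) (hω : ∀ i, IsState (ω i))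
    (Φ : B →ₗ[ℂ] ℂ) (hΦ : ∀ a : ∀ i, A i, Φ (ι a) = ∏ i, ω i (a i)) :
    ((∀ x : B, 0 ≤ Φ (star x * x)) ↔
      (∀ i j : Fin n, ¬(∀ a, ω i (θ i a) = ω i a) → ¬(∀ a, ω j (θ j a) = ω j a) → i = j)) ∧
    ((∀ x : B, Φ (θB x) = Φ x) ↔ ∀ i : Fin n, ∀ a, ω i (θ i a) = ω i a) := by
  classical
  have hωpos : ∀ i (a : A i), 0 ≤ ω i (star a * a) := fun i => (hω i).2
  have hω1 : ∀ i, ω i (1 : A i) = 1 := fun i => (hω i).1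
  have hθ1 : ∀ i, θ i (1 : A i) = 1 := fun i => map_one (θ i)
  have hωstar : ∀ i (x : A i), ω i (star x) = starRingEnd ℂ (ω i x) := by
    intro i x
    simpa using herm_aux (ω i) (hωpos i) 1 x
  have hΦsingle : ∀ (i : Fin n) (b : A i),
      Φ (ι (Function.update (fun j => (1 : A j)) i b)) = ω i b := by
    intro i b
    rw [hΦ]
    rw [Finset.prod_eq_single i (fun j _ hji => by
      rw [Function.update_of_ne hji]; exact hω1 j) (fun h => absurd (Finset.mem_univ i) h)]
    rw [Function.update_self]
  have hodd0 : ∀ k : Fin n, (∀ b, ω k (θ k b) = ω k b) → ∀ z : A k, θ k z = -z → ω k z = 0 := by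
    intro k hk z hz
    have h1 : ω k z = - ω k z := by
      conv_lhs => rw [← hk z, hz, map_neg]
    linear_combination h1 / 2
  have hupd_hom : ∀ (i : Fin n) (u : A i), θ i u = -u →
      ∀ k, θ k (Function.update (fun j => (1:A j)) i u k)
        = cond (decide (k = i)) (-(Function.update (fun j => (1:A j)) i u k))
            (Function.update (fun j => (1:A j)) i u k) := by
    intro i u hu k
    by_cases hk : k = i
    · subst hk; simp [Function.update_self, hu]
    · simp [Function.update_of_ne hk, hθ1 k, hk]
  have hodd_elt : ∀ i : Fin n, ¬(∀ a, ω i (θ i a) = ω i a) →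
      ∃ u : A i, θ i u = -u ∧ star u = u ∧ (ω i u).re ≠ 0 ∧ (ω i u).im = 0 := by
    intro i hi
    push_neg at hi
    obtain ⟨a, ha⟩ := hi
    set z := a - θ i a with hz
    have hθz : θ i z = -z := by
      rw [hz, map_sub, hθ i a, neg_sub]
    have hωz : ω i z ≠ 0 := by
      rw [hz, map_sub]
      intro h
      exact ha (sub_eq_zero.mp h).symm
    have hθsz : θ i (star z) = -(star z) := by
      rw [map_star, hθz, star_neg]
    by_cases hre : (ω i z).re ≠ 0
    · refine ⟨z + star z, ?_, ?_, ?_, ?_⟩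
      · rw [map_add, hθz, hθsz, neg_add]
      · rw [star_add, star_star, add_comm]
      · rw [map_add, hωstar]
        simp only [Complex.add_re, Complex.conj_re]
        intro h; exact hre (by linarith)
      · rw [map_add, hωstar]
        simp [Complex.add_im, Complex.conj_im]
    · push_neg at hre
      have him : (ω i z).im ≠ 0 := by
        intro h
        exact hωz (Complex.ext (by simp [hre]) (by simp [h]))
      refine ⟨Complex.I • (star z - z), ?_, ?_, ?_, ?_⟩
      · rw [map_smul, map_sub, hθsz, hθz, sub_neg_eq_add, ← smul_neg]
        congr 1
        abel
      · rw [star_smul, star_sub, star_star, Complex.star_def, Complex.conj_I, neg_smul,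
          ← smul_neg, neg_sub]
      · rw [map_smul, smul_eq_mul, map_sub, hωstar]
        simp only [Complex.mul_re, Complex.I_re, Complex.I_im, Complex.sub_re, Complex.sub_im,
          Complex.conj_re, Complex.conj_im]
        intro h; exact him (by linarith)
      · rw [map_smul, smul_eq_mul, map_sub, hωstar]
        simp [Complex.mul_im, Complex.I_re, Complex.I_im, Complex.sub_re, Complex.conj_re]
  constructor
  · -- positivity iff at most one non-even
    constructor
    · -- positivity implies at most one non-even
      intro hpos i j hi hj
      by_contra hij
      have keylt : ∀ i j : Fin n, i < j → ¬(∀ a, ω i (θ i a) = ω i a) →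
          ¬(∀ a, ω j (θ j a) = ω j a) → False := by
        clear hi hj hij
        intro i j hij hi hj
        obtain ⟨u, hθu, hsu, hure, huim⟩ := hodd_elt i hi
        obtain ⟨v, hθv, hsv, hvre, hvim⟩ := hodd_elt j hj
        have hne : i ≠ j := ne_of_lt hij
        set gu : ∀ k, A k := Function.update (fun k => (1:A k)) i u with hgu
        set gv : ∀ k, A k := Function.update (fun k => (1:A k)) j v with hgv
        set su : Fin n → Bool := fun k => decide (k = i) with hsu'
        set sv : Fin n → Bool := fun k => decide (k = j) with hsv'
        have hgu_hom : ∀ k, θ k (gu k) = cond (su k) (-(gu k)) (gu k) := hupd_hom i u hθu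
        have hgv_hom : ∀ k, θ k (gv k) = cond (sv k) (-(gv k)) (gv k) := hupd_hom j v hθv
        have hstar_gu : (fun k => star (gu k)) = gu := by
          funext k
          by_cases hk : k = i
          · subst hk; simp only [hgu, Function.update_self]; exact hsu
          · simp only [hgu, Function.update_of_ne hk]; exact star_one _
        have hstar_gv : (fun k => star (gv k)) = gv := by
          funext k
          by_cases hk : k = j
          · subst hk; simp only [hgv, Function.update_self]; exact hsv
          · simp only [hgv, Function.update_of_ne hk]; exact star_one _
        have card_uu : (Finset.univ.filter
            (fun p : Fin n × Fin n => p.1 < p.2 ∧ su p.1 = true ∧ su p.2 = true)).card = 0 := by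
          rw [Finset.card_eq_zero, Finset.filter_eq_empty_iff]
          rintro ⟨p, q⟩ -
          simp only [hsu', decide_eq_true_eq]
          rintro ⟨hlt, rfl, rfl⟩
          exact lt_irrefl _ hlt
        have card_vv : (Finset.univ.filter
            (fun p : Fin n × Fin n => p.1 < p.2 ∧ sv p.1 = true ∧ sv p.2 = true)).card = 0 := by
          rw [Finset.card_eq_zero, Finset.filter_eq_empty_iff]
          rintro ⟨p, q⟩ -
          simp only [hsv', decide_eq_true_eq]
          rintro ⟨hlt, rfl, rfl⟩
          exact lt_irrefl _ hlt
        have card_uu' : (Finset.univ.filter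
            (fun p : Fin n × Fin n => p.2 < p.1 ∧ su p.1 = true ∧ su p.2 = true)).card = 0 := by
          rw [Finset.card_eq_zero, Finset.filter_eq_empty_iff]
          rintro ⟨p, q⟩ -
          simp only [hsu', decide_eq_true_eq]
          rintro ⟨hlt, rfl, rfl⟩
          exact lt_irrefl _ hlt
        have card_vv' : (Finset.univ.filter
            (fun p : Fin n × Fin n => p.2 < p.1 ∧ sv p.1 = true ∧ sv p.2 = true)).card = 0 := by
          rw [Finset.card_eq_zero, Finset.filter_eq_empty_iff]
          rintro ⟨p, q⟩ -
          simp only [hsv', decide_eq_true_eq]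
          rintro ⟨hlt, rfl, rfl⟩
          exact lt_irrefl _ hlt
        have card_uv : (Finset.univ.filter
            (fun p : Fin n × Fin n => p.2 < p.1 ∧ su p.1 = true ∧ sv p.2 = true)).card = 0 := by
          rw [Finset.card_eq_zero, Finset.filter_eq_empty_iff]
          rintro ⟨p, q⟩ -
          simp only [hsu', hsv', decide_eq_true_eq]
          rintro ⟨hlt, rfl, rfl⟩
          exact absurd hij (not_lt_of_gt hlt)
        have card_vu : (Finset.univ.filter
            (fun p : Fin n × Fin n => p.2 < p.1 ∧ sv p.1 = true ∧ su p.2 = true)).card = 1 := by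
          have : (Finset.univ.filter
              (fun p : Fin n × Fin n => p.2 < p.1 ∧ sv p.1 = true ∧ su p.2 = true))
              = {((j, i) : Fin n × Fin n)} := by
            ext ⟨p, q⟩
            simp only [Finset.mem_filter, Finset.mem_univ, true_and, Finset.mem_singleton,
              hsu', hsv', decide_eq_true_eq, Prod.mk.injEq]
            constructor
            · rintro ⟨hlt, rfl, rfl⟩; exact ⟨rfl, rfl⟩
            · rintro ⟨rfl, rfl⟩; exact ⟨hij, rfl, rfl⟩
          rw [this, Finset.card_singleton]
        have hUV : ι gu * ι gv = ι (fun k => gu k * gv k) := by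
          rw [hmul gu gv su sv hgu_hom hgv_hom, card_uv, pow_zero, one_smul]
        have hVU : ι gv * ι gu = -ι (fun k => gv k * gu k) := by
          rw [hmul gv gu sv su hgv_hom hgu_hom, card_vu, pow_one, neg_one_smul]
        have hUU : ι gu * ι gu = ι (fun k => gu k * gu k) := by
          rw [hmul gu gu su su hgu_hom hgu_hom, card_uu', pow_zero, one_smul]
        have hVV : ι gv * ι gv = ι (fun k => gv k * gv k) := by
          rw [hmul gv gv sv sv hgv_hom hgv_hom, card_vv', pow_zero, one_smul]
        have hsU : star (ι gu) = ι gu := by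
          rw [hstar gu su hgu_hom, card_uu, pow_zero, one_smul, hstar_gu]
        have hsV : star (ι gv) = ι gv := by
          rw [hstar gv sv hgv_hom, card_vv, pow_zero, one_smul, hstar_gv]
        have hw : (fun k => gv k * gu k) = (fun k => gu k * gv k) := by
          funext k
          by_cases hk : k = i
          · subst hk
            have : gv k = 1 := by
              simp only [hgv]; exact Function.update_of_ne hne _ _
            rw [this, one_mul, mul_one]
          · have : gu k = 1 := by
              simp only [hgu]; exact Function.update_of_ne hk _ _
            rw [this, one_mul, mul_one]
        have hΦw : Φ (ι (fun k => gu k * gv k)) = ω i u * ω j v := by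
          rw [hΦ]
          have hsub : ∀ k ∈ Finset.univ, k ∉ ({i, j} : Finset (Fin n)) →
              ω k (gu k * gv k) = 1 := by
            intro k _ hk
            simp only [Finset.mem_insert, Finset.mem_singleton, not_or] at hk
            have h1 : gu k = 1 := by
              simp only [hgu]; exact Function.update_of_ne hk.1 _ _
            have h2 : gv k = 1 := by
              simp only [hgv]; exact Function.update_of_ne hk.2 _ _
            rw [h1, h2, one_mul]; exact hω1 k
          rw [← Finset.prod_subset (Finset.subset_univ ({i, j} : Finset (Fin n))) hsub]
          rw [Finset.prod_pair hne]
          have h1 : gu i * gv i = u := by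
            have e1 : gu i = u := by simp only [hgu]; exact Function.update_self _ _ _
            have e2 : gv i = 1 := by simp only [hgv]; exact Function.update_of_ne hne _ _
            rw [e1, e2, mul_one]
          have h2 : gu j * gv j = v := by
            have e1 : gu j = 1 := by simp only [hgu]; exact Function.update_of_ne hne.symm _ _
            have e2 : gv j = v := by simp only [hgv]; exact Function.update_self _ _ _
            rw [e1, e2, one_mul]
          rw [h1, h2]
        have hΦuu : Φ (ι (fun k => gu k * gu k)) = ω i (star u * u) := by
          have heq : (fun k => gu k * gu k) = Function.update (fun k => (1:A k)) i (star u * u) := by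
            funext k
            by_cases hk : k = i
            · subst hk
              rw [Function.update_self]
              have e1 : gu k = u := by simp only [hgu]; exact Function.update_self _ _ _
              rw [e1, hsu]
            · rw [Function.update_of_ne hk]
              have e1 : gu k = 1 := by simp only [hgu]; exact Function.update_of_ne hk _ _
              rw [e1, one_mul]
          rw [heq, hΦsingle]
        have hΦvv : Φ (ι (fun k => gv k * gv k)) = ω j (star v * v) := by
          have heq : (fun k => gv k * gv k) = Function.update (fun k => (1:A k)) j (star v * v) := by
            funext k
            by_cases hk : k = j
            · subst hk
              rw [Function.update_self]
              have e1 : gv k = v := by simp only [hgv]; exact Function.update_self _ _ _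
              rw [e1, hsv]
            · rw [Function.update_of_ne hk]
              have e1 : gv k = 1 := by simp only [hgv]; exact Function.update_of_ne hk _ _
              rw [e1, one_mul]
          rw [heq, hΦsingle]
        set xx : B := ι gu + Complex.I • ι gv with hxx
        have hsxx : star xx = ι gu + (-Complex.I) • ι gv := by
          rw [hxx, star_add, star_smul, Complex.star_def, Complex.conj_I, hsU, hsV]
        have hprod : star xx * xx = ι (fun k => gu k * gu k) + ι (fun k => gv k * gv k)
            + (2 * Complex.I) • ι (fun k => gu k * gv k) := by
          rw [hsxx, hxx]
          rw [add_mul, mul_add, mul_add, smul_mul_assoc, smul_mul_assoc, mul_smul_comm,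
            mul_smul_comm, smul_smul]
          rw [hUU, hUV, hVU, hVV, hw]
          have hii : -Complex.I * Complex.I = 1 := by
            rw [neg_mul, Complex.I_mul_I, neg_neg]
          rw [hii, one_smul, smul_neg]
          have h2I : Complex.I • ι (fun k => gu k * gv k)
              - (-Complex.I) • ι (fun k => gu k * gv k)
              = (2 * Complex.I) • ι (fun k => gu k * gv k) := by
            rw [neg_smul, sub_neg_eq_add, ← two_smul ℂ, smul_smul]
          rw [sub_eq_add_neg] at h2I
          calc ι (fun k => gu k * gu k) + Complex.I • ι (fun k => gu k * gv k)
                + (-(-Complex.I • ι (fun k => gu k * gv k)) + ι (fun k => gv k * gv k))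
              = ι (fun k => gu k * gu k) + ι (fun k => gv k * gv k)
                + (Complex.I • ι (fun k => gu k * gv k)
                  + -(-Complex.I • ι (fun k => gu k * gv k))) := by abel
            _ = _ := by rw [h2I]
        have hval : Φ (star xx * xx)
            = ω i (star u * u) + ω j (star v * v) + (2 * Complex.I) * (ω i u * ω j v) := by
          rw [hprod, map_add, map_add, map_smul, smul_eq_mul, hΦuu, hΦvv, hΦw]
        have h0 := hpos xx
        rw [hval] at h0
        have him0 := (Complex.le_def.mp h0).2
        have hP : (ω i (star u * u)).im = 0 := ((Complex.le_def.mp (hωpos i u)).2).symm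
        have hQ : (ω j (star v * v)).im = 0 := ((Complex.le_def.mp (hωpos j v)).2).symm
        simp only [Complex.add_im, Complex.mul_im, Complex.mul_re, Complex.I_re, Complex.I_im,
          Complex.zero_im, hP, hQ, huim, hvim, Complex.ofReal_re, Complex.mul_im] at him0
        norm_num at him0
        rcases him0 with h | h
        · exact hure h
        · exact hvre h
      rcases lt_trichotomy i j with h | h | h
      · exact keylt i j h hi hj
      · exact hij h
      · exact keylt j i h hj hi
    · -- at most one non-even implies positivity
      intro hcond x
      -- Step A: construct the sign function D
      obtain ⟨D, hD1, hDkey⟩ : ∃ D : (Fin n → Bool) → ℂ,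
          (∀ s, D s = 1 ∨ D s = -1) ∧
          (∀ (s t : Fin n → Bool) (u v : ∀ i, A i),
            (∀ k, θ k (u k) = cond (s k) (-(u k)) (u k)) →
            (∀ k, θ k (v k) = cond (t k) (-(v k)) (v k)) →
            ((-1:ℂ)) ^ (C2 s + Mst s t) * ∏ i, ω i (star (u i) * v i)
              = D s * D t * ∏ i, ω i (star (u i) * v i)) := by
        have hoddfactor : ∀ (k : Fin n) (s t : Fin n → Bool) (u v : ∀ i, A i),
            (∀ k', θ k' (u k') = cond (s k') (-(u k')) (u k')) →
            (∀ k', θ k' (v k') = cond (t k') (-(v k')) (v k')) →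
            s k ≠ t k → (∀ b, ω k (θ k b) = ω k b) → ∏ i, ω i (star (u i) * v i) = 0 := by
          intro k s t u v hu hv hne heven
          have hodd : θ k (star (u k) * v k) = -(star (u k) * v k) := by
            rw [map_mul, map_star, hu k, hv k]
            cases hsk : s k <;> cases htk : t k <;> rw [hsk, htk] at hne
            · exact absurd rfl hne
            · simp only [Bool.cond_false, Bool.cond_true, mul_neg]
            · simp only [Bool.cond_false, Bool.cond_true, star_neg, neg_mul]
            · exact absurd rfl hne
          exact Finset.prod_eq_zero (Finset.mem_univ k) (hodd0 k heven _ hodd)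
        by_cases hall : ∀ i : Fin n, ∀ b, ω i (θ i b) = ω i b
        · refine ⟨fun _ => 1, fun _ => Or.inl rfl, ?_⟩
          intro s t u v hu hv
          by_cases hst : s = t
          · subst hst
            rw [c2_eq_mss s, Even.neg_one_pow ⟨Mst s s, rfl⟩]
            ring
          · obtain ⟨k, hk⟩ : ∃ k, s k ≠ t k := by
              by_contra h
              push_neg at h
              exact hst (funext h)
            rw [hoddfactor k s t u v hu hv hk (hall k)]
            ring
        · push_neg at hall
          obtain ⟨i0, b0, hb0⟩ := hall
          have heven : ∀ jj, jj ≠ i0 → ∀ b, ω jj (θ jj b) = ω jj b := by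
            intro jj hjj
            by_contra h
            exact hjj (hcond jj i0 h (fun hc => hb0 (hc b0)))
          refine ⟨fun s => (-1:ℂ) ^ (dd i0 s), fun s => neg_one_pow_eq_or ℂ _, ?_⟩
          intro s t u v hu hv
          by_cases hst : ∀ jj, jj ≠ i0 → s jj = t jj
          · rw [neg_one_pow_congr' (parity_key i0 s t hst), pow_add]
          · push_neg at hst
            obtain ⟨jj, hjj, hsjj⟩ := hst
            rw [hoddfactor jj s t u v hu hv hsjj (heven jj hjj)]
            ring
      -- Step B: x lies in the span of homogeneous simple tensors
      set Hset : Set B := {y | ∃ (a : ∀ i, A i) (s : Fin n → Bool),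
        (∀ k, θ k (a k) = cond (s k) (-(a k)) (a k)) ∧ y = ι a} with hHset
      have hHspan : ∀ a : ∀ i, A i, ι a ∈ Submodule.span ℂ Hset := by
        have main : ∀ (S : Finset (Fin n)) (a : ∀ i, A i),
            (∀ i, i ∉ S → ∃ b : Bool, θ i (a i) = cond b (-(a i)) (a i)) →
            ι a ∈ Submodule.span ℂ Hset := by
          intro S
          induction S using Finset.induction_on with
          | empty =>
            intro a h
            apply Submodule.subset_span
            exact ⟨a, fun i => (h i (Finset.notMem_empty i)).choose,
              fun i => (h i (Finset.notMem_empty i)).choose_spec, rfl⟩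
          | @insert j S hj ih =>
            intro a ha
            set e : A j := (2:ℂ)⁻¹ • (a j + θ j (a j)) with he
            set o : A j := (2:ℂ)⁻¹ • (a j - θ j (a j)) with ho
            have hae : a j = (1:ℂ) • e + o := by
              rw [one_smul, he, ho, ← smul_add]
              have : a j + θ j (a j) + (a j - θ j (a j)) = (2:ℂ) • a j := by
                rw [two_smul]; abel
              rw [this, smul_smul, inv_mul_cancel₀ (two_ne_zero), one_smul]
            have hθe : θ j e = e := by
              rw [he, map_smul, map_add, hθ j, add_comm]
            have hθo : θ j o = -o := by
              rw [ho, map_smul, map_sub, hθ j, ← smul_neg, neg_sub]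
            have hupd : Function.update a j ((1:ℂ) • e + o) = a := by
              rw [← hae, Function.update_eq_self]
            have hdecomp : ι a = (1:ℂ) • ι (Function.update a j e) + ι (Function.update a j o) := by
              calc ι a = ι (Function.update a j ((1:ℂ) • e + o)) := by rw [hupd]
                _ = _ := hmultilin a j e o 1
            rw [hdecomp]
            apply Submodule.add_mem
            · apply Submodule.smul_mem
              apply ih
              intro k hk
              by_cases hkj : k = j
              · subst hkj
                exact ⟨false, by rw [Function.update_self]; exact hθe⟩
              · rw [Function.update_of_ne hkj]
                exact ha k (by simp [hkj, hk])
            · apply ih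
              intro k hk
              by_cases hkj : k = j
              · subst hkj
                exact ⟨true, by rw [Function.update_self]; exact hθo⟩
              · rw [Function.update_of_ne hkj]
                exact ha k (by simp [hkj, hk])
        intro a
        exact main Finset.univ a (fun i hi => absurd (Finset.mem_univ i) hi)
      have hx : x ∈ Submodule.span ℂ Hset := by
        have hx0 : x ∈ Submodule.span ℂ (Set.range ι) := by rw [hspan]; trivial
        refine Submodule.span_le.mpr ?_ hx0
        rintro y ⟨a, rfl⟩
        exact hHspan a
      rw [Submodule.mem_span_set'] at hx
      obtain ⟨m, c, g, hsum⟩ := hx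
      have hg : ∀ k, ∃ (a : ∀ i, A i) (s : Fin n → Bool),
          (∀ k', θ k' (a k') = cond (s k') (-(a k')) (a k')) ∧ (g k : B) = ι a := fun k => (g k).2
      choose a s hhom hrep using hg
      have hxsum : x = ∑ k, c k • ι (a k) := by
        rw [← hsum]
        exact Finset.sum_congr rfl (fun k _ => by rw [hrep k])
      have hhomstar : ∀ k k', θ k' (star (a k k'))
          = cond (s k k') (-(star (a k k'))) (star (a k k')) := by
        intro k k'
        rw [map_star, hhom k k']
        cases s k k' <;> simp [star_neg]
      have hsx : star x = ∑ k, starRingEnd ℂ (c k) • star (ι (a k)) := by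
        rw [hxsum, star_sum]
        exact Finset.sum_congr rfl (fun k _ => by rw [star_smul, Complex.star_def])
      have hmain1 : Φ (star x * x) = ∑ k, ∑ l, starRingEnd ℂ (c k) * c l
          * (((-1:ℂ)) ^ (C2 (s k) + Mst (s k) (s l)) * ∏ i, ω i (star (a k i) * a l i)) := by
        conv_lhs => rw [hsx, hxsum]
        rw [Finset.sum_mul_sum, map_sum]
        refine Finset.sum_congr rfl (fun k _ => ?_)
        rw [map_sum]
        refine Finset.sum_congr rfl (fun l _ => ?_)
        rw [hstar (a k) (s k) (hhom k)]
        simp only [smul_mul_assoc, mul_smul_comm]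
        rw [hmul (fun i => star (a k i)) (a l) (s k) (s l) (hhomstar k) (hhom l)]
        simp only [smul_smul]
        rw [map_smul, smul_eq_mul, hΦ]
        simp only [C2, Mst]
        rw [pow_add]
        ring
      have hmain2 : Φ (star x * x) = ∑ k, ∑ l, starRingEnd ℂ (c k * D (s k)) * (c l * D (s l))
          * ∏ i, ω i (star (a k i) * a l i) := by
        rw [hmain1]
        refine Finset.sum_congr rfl (fun k _ => Finset.sum_congr rfl (fun l _ => ?_))
        have hkey := hDkey (s k) (s l) (a k) (a l) (hhom k) (hhom l)
        have hcjk : starRingEnd ℂ (D (s k)) = D (s k) := by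
          rcases hD1 (s k) with h | h <;> rw [h] <;> simp
        rw [map_mul, hcjk]
        calc starRingEnd ℂ (c k) * c l
              * ((-1:ℂ) ^ (C2 (s k) + Mst (s k) (s l)) * ∏ i, ω i (star (a k i) * a l i))
            = starRingEnd ℂ (c k) * c l
              * (D (s k) * D (s l) * ∏ i, ω i (star (a k i) * a l i)) := by rw [hkey]
          _ = _ := by ring
      rw [hmain2]
      exact prod_gram_pos A ω hωpos Finset.univ (fun k => c k * D (s k)) a
  · -- evenness of Φ iff all states even
    constructor
    · intro h i b
      have hthis := h (ι (Function.update (fun j => (1 : A j)) i b))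
      rw [hgrading] at hthis
      have hfun : (fun j => θ j (Function.update (fun j' => (1:A j')) i b j))
          = Function.update (fun j' => (1:A j')) i (θ i b) := by
        funext j
        by_cases hji : j = i
        · subst hji; rw [Function.update_self, Function.update_self]
        · rw [Function.update_of_ne hji, Function.update_of_ne hji]; exact hθ1 j
      rw [hfun, hΦsingle, hΦsingle] at hthis
      exact hthis
    · intro hall x
      have hx : x ∈ Submodule.span ℂ (Set.range ι) := by rw [hspan]; trivial
      induction hx using Submodule.span_induction with
      | mem y hy =>
        obtain ⟨a, rfl⟩ := hy
        rw [hgrading, hΦ, hΦ]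
        exact Finset.prod_congr rfl (fun i _ => hall i (a i))
      | zero => simp
      | add y z hy hz ihy ihz => rw [map_add, map_add, map_add, ihy, ihz]
      | smul r y hy ihy => rw [map_smul, map_smul, map_smul, smul_eq_mul, smul_eq_mul, ihy]

end
end
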